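/- arXiv:2003.03809 — 7 statements merged into one kernel-verified Lean document; each statement's English description precedes it below -/
import Mathlib

section
/- Let n≥1 be an integer, let A, B ∈ ℂ, and let z_1,…,z_n ∈ ℂ satisfy z_j ≠ 0 for all j and z_k² ≠ z_l² for all k ≠ l (so that every denominator below is nonzero). Then Σ_{ε∈{±1}^n} Π_{1≤k<l≤n} (ε_k z_k + ε_l z_l − 1)/(ε_k z_k + ε_l z_l) · Π_{j=1}^n (ε_j z_j + A)(ε_j z_j + B)/(ε_j z_j) = 2^n Π_{j=0}^{n−1} (A + B − j). -/
open Complex Finset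

/-- The sign `±1 ∈ ℂ` associated to a boolean. -/
def pmSign (b : Bool) : ℂ := if b then 1 else -1

/-!
Induct on the index set `S`. Adding an index `m ∉ S` multiplies the summand of a sign vector `w`
on `S` by `h(z_m)` or `h(-z_m)`, where `h(y) = (y + A)(y + B)/y · ∏_{j ∈ S} (w_j + y - 1)/(w_j + y)`.
Partial fractions in `y` give `h(y) + h(-y) = 2(A + B - |S|) + ∑_k r_k · 2 w_k / (w_k² - y²)`.
Splitting off the factor of index `k`, the summand times `r_k` becomes minus the summand on
`S \ {k}` times `g(w_k) g(-w_k)`, with `g` the analogue of `h` over `S \ {k}`: an even function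
of `w_k`. So the `k`-th correction is odd in the sign of `w_k` and cancels over all sign vectors,
leaving `2(A + B - |S|)` times the sum for `S`.
-/

section Pairs

variable {ι M : Type*} [LinearOrder ι] [CommMonoid M]

theorem prod_filter_lt_insert (f : ι → ι → M) (hf : ∀ a b, f a b = f b a) {S : Finset ι} {m : ι}
    (hm : m ∉ S) :
    ∏ p ∈ (insert m S ×ˢ insert m S).filter (fun p => p.1 < p.2), f p.1 p.2 =
      (∏ p ∈ (S ×ˢ S).filter (fun p => p.1 < p.2), f p.1 p.2) * ∏ j ∈ S, f j m := by
  simp only [prod_filter, prod_product, prod_insert hm, lt_irrefl, if_false, one_mul]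
  rw [prod_mul_distrib, ← mul_assoc, mul_comm, ← prod_mul_distrib]
  congr 1
  refine prod_congr rfl fun j hj => ?_
  rcases lt_or_gt_of_ne (ne_of_mem_of_not_mem hj hm) with h | h
  · simp [h, h.not_gt]
  · simp [h, h.not_gt, hf m j]

end Pairs

theorem sum_powerset_eq_zero_of_insert_eq_neg {α M : Type*} [DecidableEq α] [AddCommGroup M]
    {S : Finset α} {k : α} (hk : k ∈ S) (F : Finset α → M)
    (hF : ∀ T ⊆ S.erase k, F (insert k T) = -F T) : ∑ T ∈ S.powerset, F T = 0 := by
  rw [← insert_erase hk, sum_powerset_insert (notMem_erase k S), ← sum_add_distrib]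
  exact sum_eq_zero fun T hT => by rw [hF T (mem_powerset.mp hT), add_neg_cancel]

section Factors

variable {K ι : Type*} [Field K]

def bcPair (a b : K) : K := (a + b - 1) / (a + b)

def bcWeight (A B a : K) : K := (a + A) * (a + B) / a

def bcFactor (A B : K) (S : Finset ι) (x : ι → K) (y : K) : K :=
  bcWeight A B y * ∏ j ∈ S, bcPair (x j) y

theorem bcPair_comm (a b : K) : bcPair a b = bcPair b a := by
  rw [bcPair, bcPair, add_comm]

theorem bcFactor_congr {A B : K} {S : Finset ι} {x x' : ι → K} (h : ∀ j ∈ S, x j = x' j)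
    (y : K) : bcFactor A B S x y = bcFactor A B S x' y := by
  rw [bcFactor, bcFactor, prod_congr rfl fun j hj => by rw [h j hj]]

variable [DecidableEq ι] {A B : K}

def signed (T : Finset ι) (z : ι → K) (j : ι) : K := if j ∈ T then z j else -z j

theorem signed_sq (T : Finset ι) (z : ι → K) (j : ι) : signed T z j ^ 2 = z j ^ 2 := by
  unfold signed; split_ifs <;> simp

theorem signed_ne_zero (T : Finset ι) {z : ι → K} {j : ι} (hz : z j ≠ 0) : signed T z j ≠ 0 :=
  pow_ne_zero_iff two_ne_zero |>.1 (by rw [signed_sq]; exact pow_ne_zero 2 hz)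

theorem signed_insert_self (T : Finset ι) (z : ι → K) (m : ι) : signed (insert m T) z m = z m :=
  if_pos (mem_insert_self m T)

theorem signed_of_notMem {T : Finset ι} (z : ι → K) {m : ι} (hm : m ∉ T) : signed T z m = -z m :=
  if_neg hm

theorem signed_insert_of_ne (T : Finset ι) (z : ι → K) {j m : ι} (h : j ≠ m) :
    signed (insert m T) z j = signed T z j := by
  simp only [signed, mem_insert, h, false_or]

def bcResidue (A B : K) (S : Finset ι) (x : ι → K) (k : ι) : K :=
  -bcFactor A B (S.erase k) x (-x k)

theorem bcFactor_insert {S : Finset ι} {m : ι} (hm : m ∉ S) (x : ι → K) (y : K) :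
    bcFactor A B (insert m S) x y = bcFactor A B S x y * bcPair (x m) y := by
  rw [bcFactor, bcFactor, prod_insert hm]
  ring

theorem bcResidue_insert_self {S : Finset ι} {m : ι} (hm : m ∉ S) (x : ι → K) :
    bcResidue A B (insert m S) x m = -bcFactor A B S x (-x m) := by
  rw [bcResidue, erase_insert hm]

theorem bcResidue_insert_of_mem {S : Finset ι} {m k : ι} (hm : m ∉ S) (hk : k ∈ S) (x : ι → K) :
    bcResidue A B (insert m S) x k = bcResidue A B S x k * bcPair (x m) (-x k) := by
  rw [bcResidue, bcResidue, erase_insert_of_ne (ne_of_mem_of_not_mem hk hm).symm,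
    bcFactor_insert (fun h => hm (mem_of_mem_erase h)), neg_mul]

theorem div_mul_bcPair (r : K) {y a b : K} (hya : y + a ≠ 0) (hyb : y + b ≠ 0) (hab : -b + a ≠ 0) :
    r / (y + a) * bcPair b y = r * bcPair b (-a) / (y + a) - r / (-b + a) / (y + b) := by
  have hba : b + -a ≠ 0 := fun h => hab (by linear_combination -h)
  have hby : b + y ≠ 0 := fun h => hyb (by linear_combination h)
  rw [bcPair, bcPair]
  field_simp
  ring

theorem bcFactor_eq_partialFractions {S : Finset ι} {w : ι → K} (hw : ∀ j ∈ S, w j ≠ 0)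
    (hinj : Set.InjOn w S) {y : K} (hy : y ≠ 0) (hyw : ∀ j ∈ S, y + w j ≠ 0) :
    bcFactor A B S w y = y + (A + B - #S) + A * B * (∏ j ∈ S, bcPair (w j) 0) / y +
      ∑ k ∈ S, bcResidue A B S w k / (y + w k) := by
  induction S using Finset.induction_on generalizing y with
  | empty =>
    simp only [bcFactor, bcWeight, prod_empty, card_empty, sum_empty, Nat.cast_zero]
    field_simp
    ring
  | insert m S hm ih =>
    have hwS : ∀ j ∈ S, w j ≠ 0 := fun j hj => hw j (mem_insert_of_mem hj)
    have hinjS : Set.InjOn w S := hinj.mono (by simp)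
    have hwm : w m ≠ 0 := hw m (mem_insert_self m S)
    have hym : y + w m ≠ 0 := hyw m (mem_insert_self m S)
    have hsub : ∀ k ∈ S, -w m + w k ≠ 0 := fun k hk h => ne_of_mem_of_not_mem hk hm
      (hinj (mem_insert_of_mem hk) (mem_insert_self m S) (by linear_combination h))
    have hyS : ∀ k ∈ S, y + w k ≠ 0 := fun k hk => hyw k (mem_insert_of_mem hk)
    have hres : ∑ k ∈ S, bcResidue A B (insert m S) w k / (y + w k) =
        ∑ k ∈ S, bcResidue A B S w k * bcPair (w m) (-w k) / (y + w k) :=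
      sum_congr rfl fun k hk => by rw [bcResidue_insert_of_mem hm hk]
    rw [bcFactor_insert hm, ih hwS hinjS hy hyS, card_insert_of_notMem hm, prod_insert hm,
      sum_insert hm, hres, bcResidue_insert_self hm, ih hwS hinjS (neg_ne_zero.2 hwm) hsub,
      add_mul _ (∑ _ ∈ _, _), sum_mul,
      sum_congr rfl fun k hk => div_mul_bcPair _ (hyS k hk) hym (hsub k hk),
      sum_sub_distrib, ← sum_div]
    set c := ∏ j ∈ S, bcPair (w j) 0
    set R := ∑ k ∈ S, bcResidue A B S w k * bcPair (w m) (-w k) / (y + w k)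
    set X := ∑ k ∈ S, bcResidue A B S w k / (-w m + w k)
    have hmy : w m + y ≠ 0 := fun h => hym (by linear_combination h)
    rw [bcPair, bcPair, add_zero, div_neg]
    push_cast
    field_simp
    ring

theorem bcFactor_add_bcFactor_neg {S : Finset ι} {w : ι → K} (hw : ∀ j ∈ S, w j ≠ 0)
    (hinj : Set.InjOn w S) {y : K} (hy : y ≠ 0) (hyw : ∀ j ∈ S, w j ^ 2 ≠ y ^ 2) :
    bcFactor A B S w y + bcFactor A B S w (-y) =
      2 * (A + B - #S) + ∑ k ∈ S, bcResidue A B S w k * (2 * w k / (w k ^ 2 - y ^ 2)) := by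
  have hpos : ∀ j ∈ S, y + w j ≠ 0 := fun j hj h =>
    hyw j hj (by linear_combination (w j - y) * h)
  have hneg : ∀ j ∈ S, -y + w j ≠ 0 := fun j hj h =>
    hyw j hj (by linear_combination (w j + y) * h)
  have hsum : ∑ k ∈ S, bcResidue A B S w k / (y + w k) +
      ∑ k ∈ S, bcResidue A B S w k / (-y + w k) =
      ∑ k ∈ S, bcResidue A B S w k * (2 * w k / (w k ^ 2 - y ^ 2)) := by
    rw [← sum_add_distrib]
    refine sum_congr rfl fun k hk => ?_
    have hsq : w k ^ 2 - y ^ 2 ≠ 0 := sub_ne_zero.2 (hyw k hk)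
    have h1 := hpos k hk
    have h2 := hneg k hk
    field_simp
    ring
  rw [bcFactor_eq_partialFractions hw hinj hy hpos,
    bcFactor_eq_partialFractions hw hinj (neg_ne_zero.2 hy) hneg, div_neg]
  linear_combination hsum

end Factors

section Summand

variable {K ι : Type*} [Field K] [LinearOrder ι] {A B : K}

def bcSummand (A B : K) (S : Finset ι) (x : ι → K) : K :=
  (∏ p ∈ (S ×ˢ S).filter (fun p => p.1 < p.2), bcPair (x p.1) (x p.2)) *
    ∏ j ∈ S, bcWeight A B (x j)

theorem bcSummand_insert {S : Finset ι} {m : ι} (hm : m ∉ S) (x : ι → K) :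
    bcSummand A B (insert m S) x = bcSummand A B S x * bcFactor A B S x (x m) := by
  rw [bcSummand, bcSummand, bcFactor,
    prod_filter_lt_insert (fun a b => bcPair (x a) (x b)) (fun a b => bcPair_comm _ _) hm,
    prod_insert hm]
  ring

theorem bcSummand_congr {S : Finset ι} {x x' : ι → K} (h : ∀ j ∈ S, x j = x' j) :
    bcSummand A B S x = bcSummand A B S x' := by
  unfold bcSummand
  congr 1
  · refine prod_congr rfl fun p hp => ?_
    obtain ⟨h1, h2⟩ := mem_product.mp (mem_filter.mp hp).1
    rw [h _ h1, h _ h2]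
  · exact prod_congr rfl fun j hj => by rw [h j hj]

theorem bcSummand_mul_bcResidue {S : Finset ι} {k : ι} (hk : k ∈ S) (x : ι → K) :
    bcSummand A B S x * bcResidue A B S x k * x k =
      -(bcSummand A B (S.erase k) x *
        (bcFactor A B (S.erase k) x (x k) * bcFactor A B (S.erase k) x (-x k)) * x k) := by
  nth_rewrite 1 [← insert_erase hk]
  rw [bcSummand_insert (notMem_erase k S), bcResidue]
  ring

theorem sum_powerset_bcSummand_mul_bcResidue {S : Finset ι} {k : ι} (hk : k ∈ S) (z : ι → K) :
    ∑ T ∈ S.powerset,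
      bcSummand A B S (signed T z) * bcResidue A B S (signed T z) k * signed T z k = 0 := by
  refine sum_powerset_eq_zero_of_insert_eq_neg hk _ fun T hT => ?_
  have hkT : k ∉ T := fun h => notMem_erase k S (hT h)
  have hagree : ∀ j ∈ S.erase k, signed (insert k T) z j = signed T z j :=
    fun j hj => signed_insert_of_ne T z (ne_of_mem_erase hj)
  rw [bcSummand_mul_bcResidue hk, bcSummand_mul_bcResidue hk, bcSummand_congr hagree,
    bcFactor_congr hagree, bcFactor_congr hagree, signed_insert_self, signed_of_notMem z hkT,
    neg_neg, neg_neg]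
  ring

theorem bcSummand_signed_insert_add {S T : Finset ι} {m : ι} (hm : m ∉ S) (hT : T ⊆ S)
    {z : ι → K} (hz : ∀ j ∈ insert m S, z j ≠ 0)
    (hinj : Set.InjOn (fun j => z j ^ 2) ↑(insert m S)) :
    bcSummand A B (insert m S) (signed T z) + bcSummand A B (insert m S) (signed (insert m T) z) =
      2 * (A + B - #S) * bcSummand A B S (signed T z) +
        ∑ k ∈ S, bcSummand A B S (signed T z) * bcResidue A B S (signed T z) k *
          signed T z k * (2 / (z k ^ 2 - z m ^ 2)) := by
  have hmT : m ∉ T := fun h => hm (hT h)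
  have hagree : ∀ j ∈ S, signed (insert m T) z j = signed T z j :=
    fun j hj => signed_insert_of_ne T z (ne_of_mem_of_not_mem hj hm)
  have hsq : ∀ j ∈ S, ∀ l ∈ insert m S, z j ^ 2 = z l ^ 2 → j = l :=
    fun j hj l hl h => hinj (mem_insert_of_mem hj) hl h
  have hw : ∀ j ∈ S, signed T z j ≠ 0 := fun j hj => signed_ne_zero T (hz j (mem_insert_of_mem hj))
  have hwinj : Set.InjOn (signed T z) S := fun j hj l hl h =>
    hsq j hj l (mem_insert_of_mem hl) (by rw [← signed_sq T, h, signed_sq])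
  have hwm : ∀ j ∈ S, signed T z j ^ 2 ≠ z m ^ 2 := fun j hj h =>
    ne_of_mem_of_not_mem hj hm (hsq j hj m (mem_insert_self m S) (by rwa [signed_sq] at h))
  rw [bcSummand_insert hm, bcSummand_insert hm, bcSummand_congr hagree, bcFactor_congr hagree,
    signed_insert_self, signed_of_notMem z hmT, ← mul_add, add_comm,
    bcFactor_add_bcFactor_neg hw hwinj (hz m (mem_insert_self m S)) hwm, mul_add, mul_sum]
  refine congrArg₂ _ (mul_comm _ _) (sum_congr rfl fun k _ => ?_)
  rw [signed_sq]
  ring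

theorem sum_powerset_bcSummand_signed {S : Finset ι} {z : ι → K} (hz : ∀ j ∈ S, z j ≠ 0)
    (hinj : Set.InjOn (fun j => z j ^ 2) S) :
    ∑ T ∈ S.powerset, bcSummand A B S (signed T z) = 2 ^ #S * ∏ j ∈ range #S, (A + B - j) := by
  induction S using Finset.induction_on with
  | empty => simp [bcSummand]
  | insert m S hm ih =>
    have hpair : ∀ k ∈ S, ∑ T ∈ S.powerset, bcSummand A B S (signed T z) *
        bcResidue A B S (signed T z) k * signed T z k * (2 / (z k ^ 2 - z m ^ 2)) = 0 :=
      fun k hk => by rw [← sum_mul, sum_powerset_bcSummand_mul_bcResidue hk, zero_mul]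
    rw [sum_powerset_insert hm, ← sum_add_distrib,
      sum_congr rfl fun T hT => bcSummand_signed_insert_add hm (mem_powerset.mp hT) hz hinj,
      sum_add_distrib, ← mul_sum, sum_comm, sum_eq_zero hpair,
      ih (fun j hj => hz j (mem_insert_of_mem hj)) (hinj.mono (by simp)),
      card_insert_of_notMem hm, prod_range_succ, pow_succ]
    ring

end Summand

theorem pmSign_mul_eq_signed {ι : Type*} [Fintype ι] [DecidableEq ι] (ε : ι → Bool) (z : ι → ℂ)
    (j : ι) : pmSign (ε j) * z j = signed {i | ε i} z j := by
  cases h : ε j <;> simp [pmSign, signed, h]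

theorem bijective_boolFun_filter {ι : Type*} [Fintype ι] [DecidableEq ι] :
    Function.Bijective fun ε : ι → Bool => ({i | ε i} : Finset ι) :=
  ⟨fun ε ε' h => funext fun j => by simpa using congrArg (j ∈ ·) h,
    fun T => ⟨fun j => decide (j ∈ T), by ext; simp⟩⟩

theorem bc_symmetrization_identity_general (n : ℕ) (A B : ℂ) (z : Fin n → ℂ)
    (hz : ∀ j, z j ≠ 0) (hzz : ∀ k l, k ≠ l → z k ^ 2 ≠ z l ^ 2) :
    ∑ ε : Fin n → Bool,
      (∏ p ∈ Finset.univ.filter (fun p : Fin n × Fin n => p.1 < p.2),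
        (pmSign (ε p.1) * z p.1 + pmSign (ε p.2) * z p.2 - 1)
          / (pmSign (ε p.1) * z p.1 + pmSign (ε p.2) * z p.2)) *
      ∏ j : Fin n,
        (pmSign (ε j) * z j + A) * (pmSign (ε j) * z j + B) / (pmSign (ε j) * z j)
    = 2 ^ n * ∏ j ∈ Finset.range n, (A + B - (j : ℂ)) := by
  have key := sum_powerset_bcSummand_signed (S := univ) (A := A) (B := B) (fun j _ => hz j)
    fun k _ l _ h => by_contra fun hkl => hzz k l hkl h
  rw [powerset_univ, card_univ, Fintype.card_fin] at key
  rw [← key]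
  refine Fintype.sum_bijective _ bijective_boolFun_filter _ _ fun ε => ?_
  simp only [bcSummand, bcPair, bcWeight, univ_product_univ, pmSign_mul_eq_signed]

/-- **BC-type rational symmetrization identity.**
For `n ≥ 1`, `A B ∈ ℂ` and `z₁,…,z_n ∈ ℂ` with `z_j ≠ 0` and `z_k² ≠ z_l²` for `k ≠ l`,
`Σ_{ε∈{±1}^n} Π_{k<l} (ε_k z_k + ε_l z_l − 1)/(ε_k z_k + ε_l z_l)
  · Π_j (ε_j z_j + A)(ε_j z_j + B)/(ε_j z_j) = 2^n Π_{j=0}^{n−1} (A + B − j)`. -/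
theorem bc_symmetrization_identity (n : ℕ) (hn : 1 ≤ n) (A B : ℂ) (z : Fin n → ℂ)
    (hz : ∀ j, z j ≠ 0) (hzz : ∀ k l, k ≠ l → z k ^ 2 ≠ z l ^ 2) :
    ∑ ε : Fin n → Bool,
      (∏ p ∈ Finset.univ.filter (fun p : Fin n × Fin n => p.1 < p.2),
        (pmSign (ε p.1) * z p.1 + pmSign (ε p.2) * z p.2 - 1)
          / (pmSign (ε p.1) * z p.1 + pmSign (ε p.2) * z p.2)) *
      ∏ j : Fin n,
        (pmSign (ε j) * z j + A) * (pmSign (ε j) * z j + B) / (pmSign (ε j) * z j)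
    = 2 ^ n * ∏ j ∈ Finset.range n, (A + B - (j : ℂ)) :=
  bc_symmetrization_identity_general n A B z hz hzz
end

section
/- Let n≥1 be an integer, let A, B ∈ ℂ with A ≠ 0, and let λ_1,…,λ_n ∈ ℂ satisfy λ_k² ≠ λ_ℓ² for all k ≠ ℓ and B² + λ_j² ≠ 0 for all j. Then Σ_{ε∈{±1}^n} Π_{1≤k<ℓ≤n} (1 + i/(ε_k λ_k + ε_ℓ λ_ℓ)) · Π_{j=1}^n (ε_j + i λ_j/A)/(B − i ε_j λ_j) = (2i/A)^n · Π_{j=0}^{n−1}(A + B − j) · Π_{j=1}^n λ_j/(B² + λ_j²). -/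
/-!
Clearing the denominators `B - iε_jλ_j` (their product over `j` is `∏ (B² + λ_j²)` for every `ε`)
turns the left-hand side into the value at `x = B` of a polynomial `P_λ` of degree `≤ n`:
`P_λ(x) = Σ_ε ∏_{k<ℓ} (1 + i/(ε_kλ_k + ε_ℓλ_ℓ)) ∏_j (ε_j + iλ_j/A)(x + iε_jλ_j)`.
At `x = iηλ_m` every term with `ε_m = -η` vanishes, and in the other terms the pair factor
`1 + i/(ηλ_m + ε_kλ_k)` turns `x + iε_kλ_k = i(ηλ_m + ε_kλ_k)` into `x - 1 + iε_kλ_k`, so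
`P_λ(iηλ_m) = (2i/A) λ_m (iηλ_m + A) P_λ'(iηλ_m - 1)`, where `λ'` omits `λ_m`.
The closed form `(2i/A)^n ∏_j λ_j · (x + A)(x + A - 1)⋯(x + A - n + 1)` obeys the same recursion,
so by induction on `n` both agree at the `2n` distinct points `±iλ_m`, hence everywhere.
If some `λ_m = 0` there are fewer points, but then flipping `ε_m` negates every term and both
sides vanish.
-/

open Complex Finset Polynomial

lemma pmSign_mul_self (b : Bool) : pmSign b * pmSign b = 1 := by cases b <;> simp [pmSign]

lemma pmSign_not (b : Bool) : pmSign (!b) = -pmSign b := by cases b <;> simp [pmSign]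

lemma pmSign_injective : Function.Injective pmSign := by
  intro b c; cases b <;> cases c <;> norm_num [pmSign]

lemma pmSign_mul_add_pmSign_mul_ne_zero {u v : ℂ} (huv : u ^ 2 ≠ v ^ 2) (b c : Bool) :
    pmSign b * u + pmSign c * v ≠ 0 := fun h => huv <| by
  linear_combination (pmSign b * u - pmSign c * v) * h - u ^ 2 * pmSign_mul_self b
    + v ^ 2 * pmSign_mul_self c

lemma one_add_I_div_mul_I_mul {d : ℂ} (hd : d ≠ 0) : (1 + I / d) * (I * d) = I * d - 1 := by
  field_simp
  linear_combination I_sq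

theorem Fin.prod_filter_lt_succAbove {M : Type*} [CommMonoid M] {n : ℕ} (m : Fin (n + 1))
    (g : Fin (n + 1) → Fin (n + 1) → M) (hg : ∀ a b, g a b = g b a) :
    ∏ p ∈ univ.filter (fun p : Fin (n + 1) × Fin (n + 1) => p.1 < p.2), g p.1 p.2 =
      (∏ k, g m (m.succAbove k)) *
        ∏ p ∈ univ.filter (fun p : Fin n × Fin n => p.1 < p.2),
          g (m.succAbove p.1) (m.succAbove p.2) := by
  have as_iterated : ∀ {N : ℕ} (f : Fin N → Fin N → M),
      ∏ p ∈ univ.filter (fun p : Fin N × Fin N => p.1 < p.2), f p.1 p.2 =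
        ∏ a, ∏ b, if a < b then f a b else 1 := fun f => by
    rw [prod_filter, Fintype.prod_prod_type]
  rw [as_iterated, as_iterated fun a b => g (m.succAbove a) (m.succAbove b)]
  simp only [Fin.prod_univ_succAbove _ m, lt_irrefl, if_false, one_mul,
    Fin.succAbove_lt_succAbove_iff, prod_mul_distrib, ← mul_assoc]
  congr 1
  rw [← prod_mul_distrib]
  refine prod_congr rfl fun k _ => ?_
  rcases (Fin.succAbove_ne m k).lt_or_gt with h | h
  · simp [h, h.not_gt, hg]
  · simp [h, h.not_gt]

theorem Fin.sum_pi_eq_sum_insertNth {M α : Type*} [AddCommMonoid M] [Fintype α] {n : ℕ}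
    (m : Fin (n + 1)) (f : (Fin (n + 1) → α) → M) :
    ∑ ε, f ε = ∑ b, ∑ ε' : Fin n → α, f (Fin.insertNth m b ε') := by
  rw [← (Fin.insertNthEquiv (fun _ => α) m).sum_comp, Fintype.sum_prod_type]
  rfl

section

variable {n : ℕ}

noncomputable def pairFactor (lam : Fin n → ℂ) (ε : Fin n → Bool) : ℂ :=
  ∏ p ∈ univ.filter (fun p : Fin n × Fin n => p.1 < p.2),
    (1 + I / (pmSign (ε p.1) * lam p.1 + pmSign (ε p.2) * lam p.2))

noncomputable def symmetrizedPoly (A : ℂ) (lam : Fin n → ℂ) : ℂ[X] :=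
  ∑ ε, C (pairFactor lam ε) *
    ∏ j, C (pmSign (ε j) + I * lam j / A) * (X + C (I * pmSign (ε j) * lam j))

noncomputable def closedFormPoly (A : ℂ) (lam : Fin n → ℂ) : ℂ[X] :=
  C ((2 * I / A) ^ n * ∏ j, lam j) * (descPochhammer ℂ n).comp (X + C A)

lemma eval_symmetrizedPoly (A : ℂ) (lam : Fin n → ℂ) (x : ℂ) :
    (symmetrizedPoly A lam).eval x = ∑ ε, pairFactor lam ε *
      ∏ j, (pmSign (ε j) + I * lam j / A) * (x + I * pmSign (ε j) * lam j) := by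
  simp [symmetrizedPoly, eval_finsetSum, eval_prod]

lemma eval_closedFormPoly (A : ℂ) (lam : Fin n → ℂ) (x : ℂ) :
    (closedFormPoly A lam).eval x =
      (2 * I / A) ^ n * (∏ j, lam j) * (descPochhammer ℂ n).eval (x + A) := by
  simp only [closedFormPoly, eval_mul, eval_C, eval_comp, eval_add, eval_X]

lemma natDegree_symmetrizedPoly_le (A : ℂ) (lam : Fin n → ℂ) :
    (symmetrizedPoly A lam).natDegree ≤ n := by
  refine natDegree_sum_le_of_forall_le _ _ fun ε _ => (natDegree_C_mul_le _ _).trans ?_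
  refine (natDegree_prod_le _ _).trans ?_
  refine (sum_le_card_nsmul _ _ 1 fun j _ => ?_).trans (by simp)
  exact (natDegree_C_mul_le _ _).trans (natDegree_X_add_C _).le

lemma natDegree_closedFormPoly_le (A : ℂ) (lam : Fin n → ℂ) :
    (closedFormPoly A lam).natDegree ≤ n := by
  refine (natDegree_C_mul_le _ _).trans ?_
  rw [natDegree_comp, descPochhammer_natDegree, natDegree_X_add_C, mul_one]

lemma eval_closedFormPoly_succ (A : ℂ) (lam : Fin (n + 1) → ℂ) (m : Fin (n + 1)) (x : ℂ) :
    (closedFormPoly A lam).eval x = 2 * I / A * lam m * (x + A) *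
      (closedFormPoly A fun k => lam (m.succAbove k)).eval (x - 1) := by
  simp only [eval_closedFormPoly, Fin.prod_univ_succAbove _ m, descPochhammer_succ_left,
    eval_mul, eval_X, eval_comp, eval_sub, eval_one]
  ring_nf

lemma closedFormPoly_eq_zero_of_eq_zero {A : ℂ} {lam : Fin n → ℂ} {m : Fin n}
    (hm : lam m = 0) : closedFormPoly A lam = 0 := by
  simp [closedFormPoly, prod_eq_zero (mem_univ m) hm]

lemma pairFactor_eq_mul_pairFactor_succAbove (lam : Fin (n + 1) → ℂ) (ε : Fin (n + 1) → Bool)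
    (m : Fin (n + 1)) :
    pairFactor lam ε =
      (∏ k, (1 + I / (pmSign (ε m) * lam m +
        pmSign (ε (m.succAbove k)) * lam (m.succAbove k)))) *
        pairFactor (fun k => lam (m.succAbove k)) fun k => ε (m.succAbove k) :=
  Fin.prod_filter_lt_succAbove m
    (fun a b => 1 + I / (pmSign (ε a) * lam a + pmSign (ε b) * lam b))
    fun a b => by rw [add_comm (pmSign (ε a) * lam a)]

lemma pairFactor_insertNth (lam : Fin (n + 1) → ℂ) (m : Fin (n + 1)) (η : Bool)
    (ε : Fin n → Bool) :
    pairFactor lam (Fin.insertNth m η ε) =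
      (∏ k, (1 + I / (pmSign η * lam m + pmSign (ε k) * lam (m.succAbove k)))) *
        pairFactor (fun k => lam (m.succAbove k)) ε := by
  simp only [pairFactor_eq_mul_pairFactor_succAbove _ _ m, Fin.insertNth_apply_same,
    Fin.insertNth_apply_succAbove]

lemma symmetrizedPoly_eq_zero_of_eq_zero {A : ℂ} {lam : Fin (n + 1) → ℂ} {m : Fin (n + 1)}
    (hm : lam m = 0) : symmetrizedPoly A lam = 0 := by
  rw [symmetrizedPoly, Fin.sum_pi_eq_sum_insertNth m, Fintype.sum_bool, ← sum_add_distrib]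
  refine sum_eq_zero fun ε _ => ?_
  simp only [pairFactor_insertNth, Fin.prod_univ_succAbove _ m, Fin.insertNth_apply_same,
    Fin.insertNth_apply_succAbove, hm]
  simp [pmSign]

lemma eval_symmetrizedPoly_I_mul_pmSign_mul {A : ℂ} (hA : A ≠ 0) {lam : Fin (n + 1) → ℂ}
    (hll : ∀ k l, k ≠ l → lam k ^ 2 ≠ lam l ^ 2) (m : Fin (n + 1)) (η : Bool) :
    (symmetrizedPoly A lam).eval (I * pmSign η * lam m) =
      2 * I / A * lam m * (I * pmSign η * lam m + A) *
        (symmetrizedPoly A fun k => lam (m.succAbove k)).eval (I * pmSign η * lam m - 1) := by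
  set x := I * pmSign η * lam m with hx
  rw [eval_symmetrizedPoly, eval_symmetrizedPoly, Fin.sum_pi_eq_sum_insertNth m,
    Fintype.sum_eq_single η, mul_sum]
  · refine sum_congr rfl fun ε _ => ?_
    rw [pairFactor_insertNth, Fin.prod_univ_succAbove _ m]
    simp only [Fin.insertNth_apply_same, Fin.insertNth_apply_succAbove]
    have hsite : (pmSign η + I * lam m / A) * (x + I * pmSign η * lam m) =
        2 * I / A * lam m * (x + A) := by
      rw [hx]; field_simp; linear_combination 2 * A * lam m * pmSign_mul_self η
    have hprod : (∏ k, (1 + I / (pmSign η * lam m + pmSign (ε k) * lam (m.succAbove k)))) *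
        ∏ k, (pmSign (ε k) + I * lam (m.succAbove k) / A) *
          (x + I * pmSign (ε k) * lam (m.succAbove k)) =
        ∏ k, (pmSign (ε k) + I * lam (m.succAbove k) / A) *
          (x - 1 + I * pmSign (ε k) * lam (m.succAbove k)) := by
      rw [← prod_mul_distrib]
      refine prod_congr rfl fun k _ => ?_
      have hd := pmSign_mul_add_pmSign_mul_ne_zero
        (hll m (m.succAbove k) (Fin.ne_succAbove m k)) η (ε k)
      linear_combination
        (pmSign (ε k) + I * lam (m.succAbove k) / A) * one_add_I_div_mul_I_mul hd
    rw [hsite, ← hprod]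
    ring
  · intro b hb
    refine sum_eq_zero fun ε _ => mul_eq_zero_of_right _ (prod_eq_zero (mem_univ m) ?_)
    rw [Fin.insertNth_apply_same, Bool.eq_not_iff.mpr hb, pmSign_not, hx]
    ring

lemma injective_I_mul_pmSign_mul {lam : Fin n → ℂ}
    (hll : ∀ k l, k ≠ l → lam k ^ 2 ≠ lam l ^ 2) (h0 : ∀ j, lam j ≠ 0) :
    Function.Injective fun p : Fin n × Bool => I * pmSign p.2 * lam p.1 := by
  rintro ⟨j, b⟩ ⟨k, c⟩ h
  dsimp only at h
  obtain rfl : j = k := by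
    by_contra hjk
    refine hll j k hjk ?_
    linear_combination (-(I * pmSign b * lam j + I * pmSign c * lam k)) * h
      + lam j ^ 2 * pmSign b ^ 2 * I_sq - lam j ^ 2 * pmSign_mul_self b
      - lam k ^ 2 * pmSign c ^ 2 * I_sq + lam k ^ 2 * pmSign_mul_self c
  rw [pmSign_injective (mul_left_cancel₀ I_ne_zero (mul_right_cancel₀ (h0 j) h))]

theorem symmetrizedPoly_eq_closedFormPoly {A : ℂ} (hA : A ≠ 0) (lam : Fin n → ℂ)
    (hll : ∀ k l, k ≠ l → lam k ^ 2 ≠ lam l ^ 2) :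
    symmetrizedPoly A lam = closedFormPoly A lam := by
  induction n with
  | zero => simp [symmetrizedPoly, closedFormPoly, pairFactor]
  | succ n ih =>
    by_cases h0 : ∃ m, lam m = 0
    · obtain ⟨m, hm⟩ := h0
      rw [symmetrizedPoly_eq_zero_of_eq_zero hm, closedFormPoly_eq_zero_of_eq_zero hm]
    push Not at h0
    refine eq_of_natDegree_lt_card_of_eval_eq _ _ (injective_I_mul_pmSign_mul hll h0)
      (fun ⟨m, η⟩ => ?_) ?_
    · rw [eval_symmetrizedPoly_I_mul_pmSign_mul hA hll, eval_closedFormPoly_succ A lam m,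
        ih _ fun k l hkl => hll _ _ (Fin.succAbove_right_injective.ne hkl)]
    · have := natDegree_symmetrizedPoly_le A lam
      have := natDegree_closedFormPoly_le A lam
      simp only [Fintype.card_prod, Fintype.card_fin, Fintype.card_bool]
      omega

end

theorem overlap_symmetrization_identity_general (n : ℕ) (A B : ℂ) (hA : A ≠ 0)
    (lam : Fin n → ℂ)
    (hll : ∀ k l, k ≠ l → lam k ^ 2 ≠ lam l ^ 2)
    (hB : ∀ j, B ^ 2 + lam j ^ 2 ≠ 0) :
    ∑ ε : Fin n → Bool,
      (∏ p ∈ Finset.univ.filter (fun p : Fin n × Fin n => p.1 < p.2),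
        (1 + I / (pmSign (ε p.1) * lam p.1 + pmSign (ε p.2) * lam p.2))) *
      ∏ j : Fin n, (pmSign (ε j) + I * lam j / A) / (B - I * pmSign (ε j) * lam j)
    = (2 * I / A) ^ n * (∏ j ∈ Finset.range n, (A + B - (j : ℂ))) *
        ∏ j : Fin n, lam j / (B ^ 2 + lam j ^ 2) := by
  have key := congrArg (eval B) (symmetrizedPoly_eq_closedFormPoly hA lam hll)
  rw [eval_symmetrizedPoly, eval_closedFormPoly, descPochhammer_eval_eq_prod_range] at key
  simp only [pairFactor, add_comm B A] at key
  have hconj : ∀ j b,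
      (B - I * pmSign b * lam j) * (B + I * pmSign b * lam j) = B ^ 2 + lam j ^ 2 := fun j b => by
    linear_combination (-(lam j ^ 2 * pmSign b ^ 2)) * I_sq + lam j ^ 2 * pmSign_mul_self b
  have hsite : ∀ j b, (pmSign b + I * lam j / A) / (B - I * pmSign b * lam j) =
      (pmSign b + I * lam j / A) * (B + I * pmSign b * lam j) / (B ^ 2 + lam j ^ 2) := by
    intro j b
    rw [← hconj j b, mul_div_mul_right _ _ (right_ne_zero_of_mul (hconj j b ▸ hB j))]
  simp only [hsite, prod_div_distrib, ← mul_div_assoc, ← sum_div]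
  rw [key]
  ring

/-- **Symmetrization identity for the overlap** (Lemma 2.2 / Eq. (B.9) of the paper).
For `n ≥ 1`, `A ≠ 0`, `λ_k² ≠ λ_ℓ²` for `k ≠ ℓ` and `B² + λ_j² ≠ 0`:
`Σ_{ε∈{±1}^n} Π_{k<ℓ} (1 + i/(ε_k λ_k + ε_ℓ λ_ℓ)) · Π_j (ε_j + iλ_j/A)/(B − iε_jλ_j)
  = (2i/A)^n · Π_{j=0}^{n−1}(A+B−j) · Π_j λ_j/(B²+λ_j²)`. -/
theorem overlap_symmetrization_identity (n : ℕ) (hn : 1 ≤ n) (A B : ℂ) (hA : A ≠ 0)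
    (lam : Fin n → ℂ)
    (hll : ∀ k l, k ≠ l → lam k ^ 2 ≠ lam l ^ 2)
    (hB : ∀ j, B ^ 2 + lam j ^ 2 ≠ 0) :
    ∑ ε : Fin n → Bool,
      (∏ p ∈ Finset.univ.filter (fun p : Fin n × Fin n => p.1 < p.2),
        (1 + I / (pmSign (ε p.1) * lam p.1 + pmSign (ε p.2) * lam p.2))) *
      ∏ j : Fin n, (pmSign (ε j) + I * lam j / A) / (B - I * pmSign (ε j) * lam j)
    = (2 * I / A) ^ n * (∏ j ∈ Finset.range n, (A + B - (j : ℂ))) *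
        ∏ j : Fin n, lam j / (B ^ 2 + lam j ^ 2) :=
  overlap_symmetrization_identity_general n A B hA lam hll hB
end

section
/- Let n≥1 be an integer, A ∈ ℂ with A ≠ 0, and λ_1,…,λ_n ∈ ℂ with λ_k² ≠ λ_ℓ² for all k ≠ ℓ. Then (1/(2i)^n) Σ_{P∈S_n} Σ_{ε∈{±1}^n} (Π_{p=1}^n ε_p) · A[ε_1 λ_{P(1)}, ε_2 λ_{P(2)}, …, ε_n λ_{P(n)}] = (n!/A^n) Π_{j=1}^n λ_j. (This is the evaluation Ψ_μ(0,…,0) of the half-space Bethe wavefunction with all coordinates at the boundary.) -/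
open Complex Finset

/-- The half-space Bethe amplitude
`A[μ₁,…,μ_n] = Π_{k<ℓ} (1 + i/(μ_ℓ − μ_k))(1 + i/(μ_ℓ + μ_k)) · Π_ℓ (1 + i μ_ℓ/A)`. -/
noncomputable def betheAmp {n : ℕ} (A : ℂ) (μ : Fin n → ℂ) : ℂ :=
  (∏ p ∈ Finset.univ.filter (fun p : Fin n × Fin n => p.1 < p.2),
    (1 + I / (μ p.2 - μ p.1)) * (1 + I / (μ p.2 + μ p.1))) *
  ∏ l : Fin n, (1 + I * μ l / A)

/-!
Each two-body factor `(1 + i/(μ - ν))(1 + i/(μ + ν))` is even in `ν`, so the sum over the signs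
factorises over the particles: particle `ℓ` contributes `F(λ) - F(-λ)`, where
`F(λ) = (1 + iλ/A) ∏_{k<ℓ} (1 + i/(λ - λ_k))(1 + i/(λ + λ_k))`. Summing over the permutations
according to which rapidity comes last peels off one rapidity at a time, and the induction closes
with `∑_j w_j ∏_{k≠j} λ_k = (2in/A) ∏_k λ_k`, where `w_j` is the factor of particle `j` facing all
the others. Expanding the products in `w_j` shows `w_j = λ_j Q(λ_j²) / ∏_{k≠j} (λ_j² - λ_k²)` for a
single polynomial `Q` of degree `< n` with `x^{n-1}`-coefficient `2in/A`, and by Lagrange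
interpolation at the nodes `λ_j²` the sum `∑_j Q(λ_j²) / ∏_{k≠j} (λ_j² - λ_k²)` is that coefficient.
-/

open Polynomial

noncomputable def powSumDiffPoly : ℕ → ℂ[X] × ℂ[X]
  | 0 => (2, 0)
  | m + 1 => (-(powSumDiffPoly m).1 - C 4 * X * (powSumDiffPoly m).2,
      (powSumDiffPoly m).1 - (powSumDiffPoly m).2)

theorem eval_powSumDiffPoly (m : ℕ) (a : ℂ) :
    (powSumDiffPoly m).1.eval (a ^ 2) = (2 * I * a - 1) ^ m + (-2 * I * a - 1) ^ m ∧
      2 * I * a * (powSumDiffPoly m).2.eval (a ^ 2) =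
        (2 * I * a - 1) ^ m - (-2 * I * a - 1) ^ m := by
  induction m with
  | zero => norm_num [powSumDiffPoly]
  | succ m ih =>
    obtain ⟨hsum, hdiff⟩ := ih
    simp only [powSumDiffPoly, eval_sub, eval_neg, eval_mul, eval_C, eval_X]
    constructor
    · linear_combination
        -hsum + 2 * I * a * hdiff - 4 * a ^ 2 * (powSumDiffPoly m).2.eval (a ^ 2) * I_sq
    · linear_combination 2 * I * a * hsum - hdiff

theorem natDegree_powSumDiffPoly_le (m : ℕ) :
    (powSumDiffPoly m).1.natDegree ≤ m / 2 ∧ (powSumDiffPoly m).2.natDegree ≤ (m - 1) / 2 := by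
  induction m with
  | zero => simp [powSumDiffPoly]
  | succ m ih =>
    obtain ⟨hsum, hdiff⟩ := ih
    have hX : (C (4 : ℂ) * X).natDegree ≤ 1 := (natDegree_C_mul_le _ _).trans natDegree_X_le
    have hsum' : (powSumDiffPoly m).1.natDegree ≤ (m + 1) / 2 := hsum.trans (by omega)
    refine ⟨(natDegree_sub_le _ _).trans (max_le (by rwa [natDegree_neg]) ?_),
      (natDegree_sub_le _ _).trans (max_le (by omega) (by omega))⟩
    rcases m with _ | m
    · simp [powSumDiffPoly]
    · exact natDegree_mul_le.trans (by omega)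

noncomputable def oddPartPoly (c : ℂ) (m : ℕ) : ℂ[X] :=
  C (2 * I) * (powSumDiffPoly m).2 + C (I * c) * (powSumDiffPoly m).1

theorem eval_oddPartPoly (c : ℂ) (m : ℕ) (a : ℂ) :
    a * (oddPartPoly c m).eval (a ^ 2) =
      (1 + I * c * a) * (2 * I * a - 1) ^ m - (1 - I * c * a) * (-2 * I * a - 1) ^ m := by
  obtain ⟨hsum, hdiff⟩ := eval_powSumDiffPoly m a
  simp only [oddPartPoly, eval_add, eval_mul, eval_C]
  linear_combination hdiff + I * c * a * hsum

theorem natDegree_oddPartPoly_le (c : ℂ) (m : ℕ) : (oddPartPoly c m).natDegree ≤ m / 2 := by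
  obtain ⟨hsum, hdiff⟩ := natDegree_powSumDiffPoly_le m
  refine (natDegree_add_le _ _).trans (max_le ?_ ?_)
  · exact natDegree_C_mul_le _ _ |>.trans (hdiff.trans (by omega))
  · exact natDegree_C_mul_le _ _ |>.trans hsum

theorem oddPartPoly_zero (c : ℂ) : oddPartPoly c 0 = C (2 * I * c) := by
  simp only [oddPartPoly, powSumDiffPoly, mul_zero, zero_add, C_mul, C_ofNat]
  ring

noncomputable def betheFactor (a b : ℂ) : ℂ := (1 + I / (a - b)) * (1 + I / (a + b))

theorem betheFactor_neg_right (a b : ℂ) : betheFactor a (-b) = betheFactor a b := by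
  rw [betheFactor, betheFactor, sub_neg_eq_add, ← sub_eq_add_neg, mul_comm]

theorem betheFactor_pmSign_mul_right (a : ℂ) (ε : Bool) (b : ℂ) :
    betheFactor a (pmSign ε * b) = betheFactor a b := by
  cases ε <;> simp [pmSign, betheFactor_neg_right]

theorem betheFactor_eq_div {a b : ℂ} (h : a ^ 2 ≠ b ^ 2) :
    betheFactor a b = ((a + I) ^ 2 - b ^ 2) / (a ^ 2 - b ^ 2) := by
  have hsub : a - b ≠ 0 := fun h' => h (by rw [sub_eq_zero.mp h'])
  have hadd : a + b ≠ 0 := fun h' => h (by rw [eq_neg_of_add_eq_zero_left h', neg_sq])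
  have hsq : a ^ 2 - b ^ 2 ≠ 0 := sub_ne_zero.mpr h
  rw [betheFactor]
  field_simp
  ring

section Wall

variable {ι : Type*}

/-- The contribution of a particle of rapidity `±a`, summed over its sign, facing the particles
`k ∈ s`; `c` stands for `1 / A`. -/
noncomputable def wallFactor (c a : ℂ) (s : Finset ι) (ν : ι → ℂ) : ℂ :=
  (1 + I * c * a) * ∏ k ∈ s, betheFactor a (ν k) -
    (1 - I * c * a) * ∏ k ∈ s, betheFactor (-a) (ν k)

def wallNumerator (c a : ℂ) (s : Finset ι) (ν : ι → ℂ) : ℂ :=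
  (1 + I * c * a) * ∏ k ∈ s, ((a + I) ^ 2 - ν k ^ 2) -
    (1 - I * c * a) * ∏ k ∈ s, ((a - I) ^ 2 - ν k ^ 2)

theorem wallFactor_comp_embedding {κ : Type*} (c a : ℂ) (s : Finset κ) (ν : ι → ℂ) (e : κ ↪ ι) :
    wallFactor c a s (ν ∘ e) = wallFactor c a (s.map e) ν := by
  simp [wallFactor, prod_map]

theorem wallFactor_eq_div {c a : ℂ} {s : Finset ι} {ν : ι → ℂ}
    (h : ∀ k ∈ s, a ^ 2 ≠ ν k ^ 2) :
    wallFactor c a s ν = wallNumerator c a s ν / ∏ k ∈ s, (a ^ 2 - ν k ^ 2) := by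
  have hneg : ∀ k ∈ s, betheFactor (-a) (ν k) = ((a - I) ^ 2 - ν k ^ 2) / (a ^ 2 - ν k ^ 2) :=
    fun k hk => by rw [betheFactor_eq_div (by rw [neg_sq]; exact h k hk)]; ring
  rw [wallFactor, prod_congr rfl fun k hk => betheFactor_eq_div (h k hk), prod_congr rfl hneg,
    prod_div_distrib, prod_div_distrib, wallNumerator]
  ring

theorem wallNumerator_eq_sum_powerset [DecidableEq ι] (c a : ℂ) (s : Finset ι) (ν : ι → ℂ) :
    wallNumerator c a s ν =
      ∑ t ∈ s.powerset, a * (oddPartPoly c #t).eval (a ^ 2) * ∏ k ∈ s \ t, (a ^ 2 - ν k ^ 2) := by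
  have hplus : ∀ k ∈ s, (a + I) ^ 2 - ν k ^ 2 = (2 * I * a - 1) + (a ^ 2 - ν k ^ 2) :=
    fun k _ => by linear_combination I_sq
  have hminus : ∀ k ∈ s, (a - I) ^ 2 - ν k ^ 2 = (-2 * I * a - 1) + (a ^ 2 - ν k ^ 2) :=
    fun k _ => by linear_combination I_sq
  rw [wallNumerator, prod_congr rfl hplus, prod_congr rfl hminus, prod_add, prod_add, mul_sum,
    mul_sum, ← sum_sub_distrib]
  refine sum_congr rfl fun t _ => ?_
  rw [prod_const, prod_const, eval_oddPartPoly]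
  ring

end Wall

section Interpolation

variable {ι : Type*} [Fintype ι] [DecidableEq ι]

/-- One polynomial serves every node `ν j ^ 2` in `eval_wallPoly`: the terms with `j ∉ T` vanish
there, and the others reproduce `wallNumerator_eq_sum_powerset`. -/
noncomputable def wallPoly (c : ℂ) (ν : ι → ℂ) : ℂ[X] :=
  ∑ T ∈ univ.powerset with T.Nonempty, oddPartPoly c (#T - 1) * ∏ k ∈ Tᶜ, (X - C (ν k ^ 2))

theorem eval_wallPoly (c : ℂ) (ν : ι → ℂ) (j : ι) :
    ν j * (wallPoly c ν).eval (ν j ^ 2) = wallNumerator c (ν j) (univ.erase j) ν := by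
  have hsplit : (univ : Finset ι).powerset = (insert j (univ.erase j)).powerset := by
    rw [insert_erase (mem_univ j)]
  rw [wallNumerator_eq_sum_powerset, wallPoly, eval_finsetSum, mul_sum, sum_filter, hsplit,
    sum_powerset_insert (notMem_erase j univ)]
  have hvanish : ∀ t ∈ (univ.erase j).powerset,
      (if t.Nonempty then ν j * (oddPartPoly c (#t - 1) * ∏ k ∈ tᶜ, (X - C (ν k ^ 2))).eval
        (ν j ^ 2) else 0) = 0 := by
    intro t ht
    have hj : j ∈ tᶜ := mem_compl.mpr fun hjt => (mem_erase.mp (mem_powerset.mp ht hjt)).1 rfl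
    split_ifs <;> simp [eval_prod, prod_eq_zero hj]
  rw [sum_eq_zero hvanish, zero_add]
  refine sum_congr rfl fun t ht => ?_
  have hjt : j ∉ t := fun hjt => (mem_erase.mp (mem_powerset.mp ht hjt)).1 rfl
  have hcompl : (insert j t)ᶜ = univ.erase j \ t := by
    ext k; simp [and_comm]
  rw [if_pos (insert_nonempty j t), card_insert_of_notMem hjt, Nat.add_sub_cancel, hcompl,
    eval_mul, eval_prod]
  simp only [eval_sub, eval_X, eval_C]
  ring

theorem natDegree_wallPoly_term_le (c : ℂ) (ν : ι → ℂ) (T : Finset ι) :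
    (oddPartPoly c (#T - 1) * ∏ k ∈ Tᶜ, (X - C (ν k ^ 2))).natDegree ≤
      (#T - 1) / 2 + (Fintype.card ι - #T) := by
  refine natDegree_mul_le.trans (add_le_add (natDegree_oddPartPoly_le c _) ?_)
  rw [natDegree_finsetProd_X_sub_C_eq_card, card_compl]

theorem degree_wallPoly_lt (c : ℂ) (ν : ι → ℂ) : (wallPoly c ν).degree < Fintype.card ι := by
  refine (degree_sum_le _ _).trans_lt ((Finset.sup_lt_iff (WithBot.bot_lt_coe _)).mpr ?_)
  intro T hT
  have hpos : 0 < #T := (mem_filter.mp hT).2.card_pos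
  have hle : #T ≤ Fintype.card ι := card_le_univ T
  refine degree_le_natDegree.trans_lt ?_
  exact_mod_cast (natDegree_wallPoly_term_le c ν T).trans_lt (by omega)

theorem coeff_wallPoly (c : ℂ) (ν : ι → ℂ) :
    (wallPoly c ν).coeff (Fintype.card ι - 1) = 2 * I * c * Fintype.card ι := by
  have hterm : ∀ T : Finset ι, T.Nonempty →
      (oddPartPoly c (#T - 1) * ∏ k ∈ Tᶜ, (X - C (ν k ^ 2))).coeff (Fintype.card ι - 1) =
        if #T = 1 then 2 * I * c else 0 := by
    intro T hT
    split_ifs with hcard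
    · obtain ⟨j, rfl⟩ := card_eq_one.mp hcard
      have hdeg : (∏ k ∈ {j}ᶜ, (X - C (ν k ^ 2))).natDegree = Fintype.card ι - 1 := by
        rw [natDegree_finsetProd_X_sub_C_eq_card, card_compl, card_singleton]
      rw [hcard, Nat.sub_self, oddPartPoly_zero, coeff_C_mul, ← hdeg,
        (monic_prod_X_sub_C _ _).coeff_natDegree, mul_one]
    · have hpos : 0 < #T := hT.card_pos
      have hle : #T ≤ Fintype.card ι := card_le_univ T
      exact coeff_eq_zero_of_natDegree_lt
        ((natDegree_wallPoly_term_le c ν T).trans_lt (by omega))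
  rw [wallPoly, finsetSum_coeff, sum_congr rfl fun T hT => hterm T (mem_filter.mp hT).2, sum_ite,
    sum_const_zero, add_zero, sum_const, filter_filter]
  have hsingletons :
      {T ∈ (univ : Finset ι).powerset | T.Nonempty ∧ #T = 1} = univ.powersetCard 1 := by
    rw [powersetCard_eq_filter]
    exact filter_congr fun T _ => ⟨And.right, fun h => ⟨card_pos.mp (by omega), h⟩⟩
  rw [hsingletons, card_powersetCard, Nat.choose_one_right, card_univ, nsmul_eq_mul]
  ring

end Interpolation

theorem sum_wallFactor_mul_prod_erase {ι : Type*} [Fintype ι] [DecidableEq ι] (c : ℂ)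
    {ν : ι → ℂ} (hν : Function.Injective fun k => ν k ^ 2) :
    ∑ j, wallFactor c (ν j) (univ.erase j) ν * ∏ k ∈ univ.erase j, ν k =
      2 * I * c * Fintype.card ι * ∏ k, ν k := by
  have hterm : ∀ j, wallFactor c (ν j) (univ.erase j) ν * ∏ k ∈ univ.erase j, ν k =
      (∏ k, ν k) * ((wallPoly c ν).eval (ν j ^ 2) / ∏ k ∈ univ.erase j, (ν j ^ 2 - ν k ^ 2)) := by
    intro j
    rw [wallFactor_eq_div fun k hk => hν.ne (ne_of_mem_erase hk).symm, ← eval_wallPoly,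
      ← mul_prod_erase univ ν (mem_univ j)]
    ring
  have hdeg : (wallPoly c ν).degree < #(univ : Finset ι) := by
    simpa using degree_wallPoly_lt c ν
  rw [sum_congr rfl fun j _ => hterm j, ← mul_sum,
    ← Lagrange.coeff_eq_sum hν.injOn hdeg, card_univ, coeff_wallPoly]
  ring

section OrderedProducts

variable {n : ℕ}

noncomputable def prefixProd (c : ℂ) (ν : Fin n → ℂ) : ℂ := ∏ l, wallFactor c (ν l) (Iio l) ν

noncomputable def suffixProd (c : ℂ) (ν : Fin n → ℂ) : ℂ := ∏ l, wallFactor c (ν l) (Ioi l) ν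

theorem prefixProd_comp_rev (c : ℂ) (ν : Fin n → ℂ) :
    prefixProd c (ν ∘ Fin.rev) = suffixProd c ν := by
  rw [prefixProd, ← Equiv.prod_comp Fin.revPerm]
  refine prod_congr rfl fun l _ => ?_
  rw [show ν ∘ Fin.rev = ν ∘ Fin.revPerm.toEmbedding from rfl, wallFactor_comp_embedding,
    Fin.map_revPerm_Iio]
  simp

theorem suffixProd_cons (c a : ℂ) (ν : Fin n → ℂ) :
    suffixProd c (Fin.cons a ν : Fin (n + 1) → ℂ) = wallFactor c a univ ν * suffixProd c ν := by
  have hcons : ∀ s : Finset (Fin n), ∀ b : ℂ,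
      wallFactor c b (s.map (Fin.succEmb n)) (Fin.cons a ν) = wallFactor c b s ν := by
    intro s b
    rw [← wallFactor_comp_embedding, Fin.coe_succEmb, Fin.cons_comp_succ]
  rw [suffixProd, Fin.prod_univ_succ, Fin.cons_zero, Fin.Ioi_zero_eq_map, hcons, suffixProd]
  congr 1
  refine prod_congr rfl fun l _ => ?_
  rw [Fin.cons_succ, ← Fin.map_succEmb_Ioi, hcons]

end OrderedProducts

theorem Equiv.Perm.sum_comp_eq_sum_cons {α M : Type*} [AddCommMonoid M] {n : ℕ}
    (F : (Fin (n + 1) → α) → M) (ν : Fin (n + 1) → α) :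
    ∑ P : Equiv.Perm (Fin (n + 1)), F (ν ∘ P) =
      ∑ i, ∑ σ : Equiv.Perm (Fin n), F (Fin.cons (ν i) (ν ∘ Equiv.swap 0 i ∘ Fin.succ ∘ σ)) := by
  rw [← Equiv.Perm.decomposeFin.symm.sum_comp, Fintype.sum_prod_type]
  refine sum_congr rfl fun i _ => sum_congr rfl fun σ _ => congrArg F (funext fun k => ?_)
  refine Fin.cases ?_ (fun k => ?_) k
  · simp [Equiv.Perm.decomposeFin_symm_apply_zero]
  · simp [Equiv.Perm.decomposeFin_symm_apply_succ]

theorem Fin.map_succEmb_trans_swap_univ {n : ℕ} (i : Fin (n + 1)) :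
    univ.map ((Fin.succEmb n).trans (Equiv.swap 0 i).toEmbedding) = univ.erase i := by
  ext k
  simp [Equiv.swap_apply_eq_iff, Fin.exists_succ_eq]

theorem sum_perm_suffixProd (c : ℂ) : ∀ {n : ℕ} (ν : Fin n → ℂ),
    Function.Injective (fun k => ν k ^ 2) →
      ∑ P : Equiv.Perm (Fin n), suffixProd c (ν ∘ P) = (2 * I * c) ^ n * n.factorial * ∏ k, ν k
  | 0, ν, _ => by simp [suffixProd]
  | n + 1, ν, hν => by
    have hpeel : ∀ i, ∑ σ : Equiv.Perm (Fin n),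
        suffixProd c (Fin.cons (ν i) (ν ∘ Equiv.swap 0 i ∘ Fin.succ ∘ σ)) =
          (2 * I * c) ^ n * n.factorial *
            (wallFactor c (ν i) (univ.erase i) ν * ∏ k ∈ univ.erase i, ν k) := by
      intro i
      let e := (Fin.succEmb n).trans (Equiv.swap 0 i).toEmbedding
      have hσ : ∀ σ : Equiv.Perm (Fin n),
          wallFactor c (ν i) univ ((ν ∘ e) ∘ σ) = wallFactor c (ν i) (univ.erase i) ν := by
        intro σ
        rw [show (ν ∘ e) ∘ σ = (ν ∘ e) ∘ σ.toEmbedding from rfl, wallFactor_comp_embedding,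
          map_univ_equiv, wallFactor_comp_embedding, Fin.map_succEmb_trans_swap_univ]
      have hprod : ∏ k, (ν ∘ e) k = ∏ k ∈ univ.erase i, ν k := by
        rw [← Fin.map_succEmb_trans_swap_univ, prod_map]
        rfl
      change ∑ σ : Equiv.Perm (Fin n), suffixProd c (Fin.cons (ν i) ((ν ∘ e) ∘ σ)) = _
      simp_rw [suffixProd_cons, hσ]
      rw [← mul_sum, sum_perm_suffixProd c (ν ∘ e) (hν.comp e.injective), hprod]
      ring
    rw [Equiv.Perm.sum_comp_eq_sum_cons, sum_congr rfl fun i _ => hpeel i, ← mul_sum,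
      sum_wallFactor_mul_prod_erase c hν, Fintype.card_fin, Nat.factorial_succ]
    push_cast
    ring

theorem sum_perm_prefixProd (c : ℂ) {n : ℕ} {ν : Fin n → ℂ}
    (hν : Function.Injective fun k => ν k ^ 2) :
    ∑ P : Equiv.Perm (Fin n), prefixProd c (ν ∘ P) = (2 * I * c) ^ n * n.factorial * ∏ k, ν k := by
  rw [← sum_perm_suffixProd c ν hν, ← Equiv.sum_comp (Equiv.mulRight Fin.revPerm)]
  exact sum_congr rfl fun P _ => prefixProd_comp_rev c (ν ∘ P)

theorem betheAmp_eq_prod {n : ℕ} (A : ℂ) (μ : Fin n → ℂ) :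
    betheAmp A μ = ∏ l, (1 + I * μ l / A) * ∏ k ∈ Iio l, betheFactor (μ l) (μ k) := by
  rw [prod_mul_distrib, betheAmp, mul_comm, prod_filter, ← univ_product_univ,
    prod_product_right]
  congr 1
  refine prod_congr rfl fun l _ => ?_
  rw [← prod_filter, filter_gt_eq_Iio]
  rfl

theorem sum_signs_mul_betheAmp {n : ℕ} (A : ℂ) (ν : Fin n → ℂ) :
    ∑ ε : Fin n → Bool, (∏ p, pmSign (ε p)) * betheAmp A (fun p => pmSign (ε p) * ν p) =
      prefixProd A⁻¹ ν := by
  have hfactor : ∀ ε : Fin n → Bool,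
      (∏ p, pmSign (ε p)) * betheAmp A (fun p => pmSign (ε p) * ν p) =
        ∏ l, pmSign (ε l) * ((1 + I * (pmSign (ε l) * ν l) / A) *
          ∏ k ∈ Iio l, betheFactor (pmSign (ε l) * ν l) (ν k)) := by
    intro ε
    simp only [betheAmp_eq_prod, betheFactor_pmSign_mul_right, prod_mul_distrib]
  rw [sum_congr rfl fun ε _ => hfactor ε, ← Fintype.prod_sum fun l (b : Bool) => pmSign b *
    ((1 + I * (pmSign b * ν l) / A) * ∏ k ∈ Iio l, betheFactor (pmSign b * ν l) (ν k)), prefixProd]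
  refine prod_congr rfl fun l _ => ?_
  simp only [Fintype.sum_bool, pmSign, ite_true, Bool.false_eq_true, ite_false, one_mul,
    neg_one_mul, wallFactor]
  ring

theorem bethe_wavefunction_at_wall_general (n : ℕ) (A : ℂ)
    (lam : Fin n → ℂ) (hll : ∀ k l, k ≠ l → lam k ^ 2 ≠ lam l ^ 2) :
    (1 / (2 * I) ^ n) *
      ∑ P : Equiv.Perm (Fin n), ∑ ε : Fin n → Bool,
        (∏ p : Fin n, pmSign (ε p)) *
          betheAmp A (fun p => pmSign (ε p) * lam (P p))
    = ((n.factorial : ℂ) / A ^ n) * ∏ j : Fin n, lam j := by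
  have hsq : Function.Injective fun k => lam k ^ 2 :=
    fun k l h => by_contra fun hkl => hll k l hkl h
  have hsigns : ∀ P : Equiv.Perm (Fin n), ∑ ε : Fin n → Bool,
      (∏ p, pmSign (ε p)) * betheAmp A (fun p => pmSign (ε p) * lam (P p)) =
        prefixProd A⁻¹ (lam ∘ P) := fun P => sum_signs_mul_betheAmp A (lam ∘ P)
  rw [sum_congr rfl fun P _ => hsigns P, sum_perm_prefixProd _ hsq]
  field_simp
  ring

/-- **Evaluation of the half-space Bethe wavefunction at the boundary:**
`Ψ_μ(0,…,0) = (1/(2i)^n) Σ_{P∈S_n} Σ_{ε∈{±1}^n} (Π_p ε_p) A[ε₁λ_{P(1)},…,ε_nλ_{P(n)}]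
  = (n!/A^n) Π_j λ_j`. -/
theorem bethe_wavefunction_at_wall (n : ℕ) (hn : 1 ≤ n) (A : ℂ) (hA : A ≠ 0)
    (lam : Fin n → ℂ) (hll : ∀ k l, k ≠ l → lam k ^ 2 ≠ lam l ^ 2) :
    (1 / (2 * I) ^ n) *
      ∑ P : Equiv.Perm (Fin n), ∑ ε : Fin n → Bool,
        (∏ p : Fin n, pmSign (ε p)) *
          betheAmp A (fun p => pmSign (ε p) * lam (P p))
    = ((n.factorial : ℂ) / A ^ n) * ∏ j : Fin n, lam j :=
  bethe_wavefunction_at_wall_general n A lam hll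
end

section
/- Let n≥1 be an integer, B ∈ ℝ, and λ_1,…,λ_n ∈ ℂ such that for every j ∈ {1,…,n}: −Im(λ_n + λ_{n−1} + ⋯ + λ_{n+1−j}) + j²/2 − j(B+1/2) < 0. Then the iterated integral over the simplex {0 < y_1 < y_2 < ⋯ < y_n} of exp( Σ_{j=1}^n ( −B − 1/2 + i λ_j + (2n+1−2j)/2 ) y_j ) dy_1 ⋯ dy_n converges absolutely and equals Π_{j=1}^n (−1)/( −j(B+1/2) + i(λ_n + ⋯ + λ_{n+1−j}) + j²/2 ). -/
/-! The partial-sum map `L x = (x₁, x₁ + x₂, …, x₁ + ⋯ + x_n)` is lower unitriangular, hence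
preserves Lebesgue measure, and it maps the positive orthant onto the simplex
`0 < y₁ < ⋯ < y_n`. Under `y = L x` the exponent `∑ c_j y_j` becomes `∑ s_k x_k` with the tail sums
`s_k = c_k + ⋯ + c_n`, so the integral splits into `∏ ∫₀^∞ e^{s_k x} dx = ∏ (-1 / s_k)`, valid
when every `Re s_k < 0`. For the coefficients of the theorem, `s_k` is the factor of the product
with `j = n + 1 - k`, and `Re s_k < 0` is exactly the convergence condition. -/

open Complex Finset MeasureTheory

section PartialSums

variable {ι : Type*} [Fintype ι] [LinearOrder ι]

variable (ι) in
noncomputable def partialSums : (ι → ℝ) →ₗ[ℝ] ι → ℝ :=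
  Matrix.toLin' (Matrix.of fun j k => if k ≤ j then 1 else 0)

theorem partialSums_apply (x : ι → ℝ) (j : ι) : partialSums ι x j = ∑ k with k ≤ j, x k := by
  simp [partialSums, Matrix.mulVec, dotProduct, Finset.sum_filter]

theorem det_partialSums : LinearMap.det (partialSums ι) = 1 := by
  classical
  rw [partialSums, LinearMap.det_toLin', Matrix.det_of_isLowerTriangular]
  · simp
  · intro i j hij
    simpa using hij

theorem measurePreserving_partialSums : MeasurePreserving (partialSums ι) := by
  refine ⟨(partialSums ι).continuous_of_finiteDimensional.measurable, ?_⟩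
  rw [Real.map_linearMap_volume_pi_eq_smul_volume_pi (by simp [det_partialSums]),
    det_partialSums]
  simp

theorem measurableEmbedding_partialSums : MeasurableEmbedding (partialSums ι) := by
  let e := LinearMap.equivOfDetNeZero (partialSums ι) (by simp [det_partialSums])
  exact e.toContinuousLinearEquiv.toHomeomorph.measurableEmbedding

theorem partialSums_of_isMin (x : ι → ℝ) {i : ι} (hi : IsMin i) : partialSums ι x i = x i := by
  rw [partialSums_apply, Finset.sum_eq_single_of_mem i (by simp)]
  exact fun k hk hki => absurd (hi.eq_of_le (Finset.mem_filter.mp hk).2) hki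

theorem partialSums_of_covBy (x : ι → ℝ) {i j : ι} (hji : j ⋖ i) :
    partialSums ι x i = partialSums ι x j + x i := by
  have : univ.filter (· ≤ i) = insert i (univ.filter (· ≤ j)) := by
    ext k
    simp only [Finset.mem_insert, Finset.mem_filter, Finset.mem_univ, true_and]
    exact ⟨fun hk => hk.eq_or_lt.imp_right hji.le_of_lt,
      fun hk => hk.elim le_of_eq (·.trans hji.le)⟩
  rw [partialSums_apply, partialSums_apply, this, sum_insert (by simpa using hji.lt), add_comm]

theorem partialSums_preimage_simplex :
    partialSums ι ⁻¹' {y | (∀ i, 0 < y i) ∧ StrictMono y} = Set.univ.pi fun _ => Set.Ioi 0 := by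
  ext x
  simp only [Set.mem_preimage, Set.mem_ofPred_eq, Set.mem_univ_pi, Set.mem_Ioi]
  constructor
  · rintro ⟨hpos, hmono⟩ i
    by_cases hi : IsMin i
    · simpa [partialSums_of_isMin x hi] using hpos i
    · obtain ⟨k, hki⟩ := not_isMin_iff.mp hi
      obtain ⟨j, -, hji⟩ := exists_le_covBy_of_lt hki
      have := hmono hji.lt
      rw [partialSums_of_covBy x hji] at this
      linarith
  · intro hx
    refine ⟨fun i => ?_, fun i j hij => ?_⟩
    · rw [partialSums_apply]
      exact sum_pos (fun k _ => hx k) ⟨i, by simp⟩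
    · rw [partialSums_apply, partialSums_apply]
      refine sum_lt_sum_of_subset (fun k => ?_) (i := j) (by simp) (by simpa using hij)
        (hx j) fun k _ _ => (hx k).le
      simpa using (·.trans hij.le)

theorem sum_mul_partialSums (c : ι → ℂ) (x : ι → ℝ) :
    ∑ j, c j * (partialSums ι x j : ℂ) = ∑ k, (∑ j with k ≤ j, c j) * x k := by
  simp_rw [partialSums_apply, ofReal_sum, mul_sum, sum_mul, sum_filter]
  exact sum_comm

end PartialSums

section Orthant

variable {ι : Type*} [Fintype ι]

theorem integrableOn_pi_Ioi_prod_cexp {s : ι → ℂ} (hs : ∀ i, (s i).re < 0) :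
    IntegrableOn (fun x : ι → ℝ => ∏ i, cexp (s i * x i)) (Set.univ.pi fun _ => Set.Ioi 0) := by
  rw [IntegrableOn, volume_pi, Measure.restrict_pi_pi]
  exact Integrable.fintype_prod fun i => integrableOn_exp_mul_complex_Ioi (hs i) 0

theorem integral_pi_Ioi_prod_cexp {s : ι → ℂ} (hs : ∀ i, (s i).re < 0) :
    ∫ x : ι → ℝ in Set.univ.pi fun _ => Set.Ioi (0 : ℝ), ∏ i, cexp (s i * x i)
      = ∏ i, -1 / s i := by
  rw [volume_pi, Measure.restrict_pi_pi,
    integral_fintype_prod_eq_prod fun i (t : ℝ) => cexp (s i * t)]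
  refine prod_congr rfl fun i _ => ?_
  simpa using integral_exp_mul_complex_Ioi (hs i) 0

end Orthant

section Simplex

variable {ι : Type*} [Fintype ι] [LinearOrder ι] {c : ι → ℂ}

theorem integrableOn_simplex_cexp_sum (hc : ∀ k, (∑ j with k ≤ j, c j).re < 0) :
    IntegrableOn (fun y : ι → ℝ => cexp (∑ j, c j * (y j : ℂ)))
      {y | (∀ i, 0 < y i) ∧ StrictMono y} := by
  rw [← measurePreserving_partialSums.integrableOn_comp_preimage measurableEmbedding_partialSums,
    partialSums_preimage_simplex]
  simp only [Function.comp_def, sum_mul_partialSums]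
  simpa only [exp_sum] using integrableOn_pi_Ioi_prod_cexp hc

theorem integral_simplex_cexp_sum (hc : ∀ k, (∑ j with k ≤ j, c j).re < 0) :
    ∫ y in {y : ι → ℝ | (∀ i, 0 < y i) ∧ StrictMono y}, cexp (∑ j, c j * (y j : ℂ))
      = ∏ k, -1 / ∑ j with k ≤ j, c j := by
  rw [← measurePreserving_partialSums.setIntegral_preimage_emb measurableEmbedding_partialSums,
    partialSums_preimage_simplex]
  simp_rw [sum_mul_partialSums, exp_sum]
  exact integral_pi_Ioi_prod_cexp hc

end Simplex

theorem sum_Ico_sub_sub_half {k n : ℕ} (h : k ≤ n) :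
    ∑ t ∈ Ico k n, ((n : ℂ) - t - 1 / 2) = ((n : ℂ) - k) ^ 2 / 2 := by
  convert sum_Ico_sub (fun t : ℕ => -((n : ℂ) - t) ^ 2 / 2) h using 1
  · refine sum_congr rfl fun t _ => ?_
    push_cast
    ring
  · ring

noncomputable def simplexCoeff (n : ℕ) (B : ℝ) (lam : Fin n → ℂ) (j : Fin n) : ℂ :=
  -(B : ℂ) - 1 / 2 + I * lam j + (2 * (n : ℂ) + 1 - 2 * (((j : ℕ) : ℂ) + 1)) / 2

noncomputable def simplexFactorDenom (n : ℕ) (B : ℝ) (lam : Fin n → ℂ) (j : ℕ) : ℂ :=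
  -(((j : ℕ) : ℂ) + 1) * ((B : ℂ) + 1 / 2)
    + I * (∑ l ∈ Finset.univ.filter (fun l : Fin n => n - (j + 1) ≤ (l : ℕ)), lam l)
    + (((j : ℕ) : ℂ) + 1) ^ 2 / 2

theorem sum_simplexCoeff_Ici {n : ℕ} (B : ℝ) (lam : Fin n → ℂ) (k : Fin n) :
    ∑ j with k ≤ j, simplexCoeff n B lam j = simplexFactorDenom n B lam k.rev := by
  have hIci : ∀ f : ℕ → ℂ, ∑ j with k ≤ j, f j = ∑ t ∈ Ico (k : ℕ) n, f t := fun f => by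
    rw [filter_le_eq_Ici, ← Fin.map_valEmbedding_Ici, sum_map]
    rfl
  have hrev : n - ((k.rev : ℕ) + 1) = k := by simp only [Fin.val_rev]; omega
  have hcast : ((k.rev : ℕ) : ℂ) + 1 = n - k := by
    rw [Fin.val_rev]
    push_cast [Nat.cast_sub (by omega : (k : ℕ) + 1 ≤ n)]
    ring
  have hconst : ∑ j with k ≤ j, (-(B : ℂ) - 1 / 2) = ((n : ℂ) - k) * (-(B : ℂ) - 1 / 2) := by
    rw [hIci fun _ => -(B : ℂ) - 1 / 2, sum_const, Nat.card_Ico, nsmul_eq_mul,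
      Nat.cast_sub k.isLt.le]
  have hlin : ∑ j with k ≤ j, (2 * (n : ℂ) + 1 - 2 * (((j : ℕ) : ℂ) + 1)) / 2
      = ((n : ℂ) - k) ^ 2 / 2 := by
    rw [hIci fun t => (2 * (n : ℂ) + 1 - 2 * ((t : ℂ) + 1)) / 2,
      ← sum_Ico_sub_sub_half k.isLt.le]
    exact sum_congr rfl fun t _ => by ring
  simp only [simplexCoeff, simplexFactorDenom, hrev, hcast, sum_add_distrib, ← mul_sum,
    hconst, hlin, Fin.val_fin_le]
  ring

theorem re_simplexFactorDenom {n : ℕ} (B : ℝ) (lam : Fin n → ℂ) (j : ℕ) :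
    (simplexFactorDenom n B lam j).re =
      -(∑ l ∈ Finset.univ.filter (fun l : Fin n => n - (j + 1) ≤ (l : ℕ)), lam l).im
        + ((j : ℝ) + 1) ^ 2 / 2 - ((j : ℝ) + 1) * (B + 1 / 2) := by
  set Λ := ∑ l ∈ Finset.univ.filter (fun l : Fin n => n - (j + 1) ≤ (l : ℕ)), lam l
  have hsplit : simplexFactorDenom n B lam j
      = ((-((j : ℝ) + 1) * (B + 1 / 2) + ((j : ℝ) + 1) ^ 2 / 2 : ℝ) : ℂ) + I * Λ := by
    simp only [simplexFactorDenom]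
    push_cast
    ring
  rw [hsplit, add_re, ofReal_re, mul_re, I_re, I_im]
  ring

theorem simplex_exponential_integral_general (n : ℕ) (B : ℝ) (lam : Fin n → ℂ)
    (hconv : ∀ j ∈ Finset.range n,
      -(∑ l ∈ Finset.univ.filter (fun l : Fin n => n - (j + 1) ≤ (l : ℕ)), lam l).im
        + ((j : ℝ) + 1) ^ 2 / 2 - ((j : ℝ) + 1) * (B + 1 / 2) < 0) :
    MeasureTheory.IntegrableOn
      (fun y : Fin n → ℝ => Complex.exp (∑ j : Fin n,
        (-(B : ℂ) - 1 / 2 + I * lam j + (2 * (n : ℂ) + 1 - 2 * (((j : ℕ) : ℂ) + 1)) / 2)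
          * (y j : ℂ)))
      {y : Fin n → ℝ | (∀ i, 0 < y i) ∧ StrictMono y} ∧
    (∫ y in {y : Fin n → ℝ | (∀ i, 0 < y i) ∧ StrictMono y},
      Complex.exp (∑ j : Fin n,
        (-(B : ℂ) - 1 / 2 + I * lam j + (2 * (n : ℂ) + 1 - 2 * (((j : ℕ) : ℂ) + 1)) / 2)
          * (y j : ℂ)))
      = ∏ j ∈ Finset.range n,
          (-1) / (-(((j : ℕ) : ℂ) + 1) * ((B : ℂ) + 1 / 2)
            + I * (∑ l ∈ Finset.univ.filter (fun l : Fin n => n - (j + 1) ≤ (l : ℕ)), lam l)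
            + (((j : ℕ) : ℂ) + 1) ^ 2 / 2) := by
  have hre (k : Fin n) : (∑ j with k ≤ j, simplexCoeff n B lam j).re < 0 := by
    rw [sum_simplexCoeff_Ici, re_simplexFactorDenom]
    exact hconv _ (Finset.mem_range.mpr k.rev.isLt)
  refine ⟨integrableOn_simplex_cexp_sum hre, (integral_simplex_cexp_sum hre).trans ?_⟩
  refine .trans ?_ (Fin.prod_univ_eq_prod_range (fun j => -1 / simplexFactorDenom n B lam j) n)
  exact Fintype.prod_equiv Fin.revPerm _ _ fun k => by rw [sum_simplexCoeff_Ici]; rfl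

/-- **Simplex integral `G_{n,w}` for the overlap computation.**
Under the convergence condition `−Im(λ_n+⋯+λ_{n+1−j}) + j²/2 − j(B+1/2) < 0` for
every `j ∈ {1,…,n}`, the iterated integral over `{0 < y₁ < ⋯ < y_n}` of
`exp( Σ_j (−B−1/2 + iλ_j + (2n+1−2j)/2) y_j )` converges absolutely and equals
`Π_{j=1}^n (−1)/( −j(B+1/2) + i(λ_n+⋯+λ_{n+1−j}) + j²/2 )`. -/
theorem simplex_exponential_integral (n : ℕ) (hn : 1 ≤ n) (B : ℝ) (lam : Fin n → ℂ)
    (hconv : ∀ j ∈ Finset.range n,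
      -(∑ l ∈ Finset.univ.filter (fun l : Fin n => n - (j + 1) ≤ (l : ℕ)), lam l).im
        + ((j : ℝ) + 1) ^ 2 / 2 - ((j : ℝ) + 1) * (B + 1 / 2) < 0) :
    MeasureTheory.IntegrableOn
      (fun y : Fin n → ℝ => Complex.exp (∑ j : Fin n,
        (-(B : ℂ) - 1 / 2 + I * lam j + (2 * (n : ℂ) + 1 - 2 * (((j : ℕ) : ℂ) + 1)) / 2)
          * (y j : ℂ)))
      {y : Fin n → ℝ | (∀ i, 0 < y i) ∧ StrictMono y} ∧
    (∫ y in {y : Fin n → ℝ | (∀ i, 0 < y i) ∧ StrictMono y},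
      Complex.exp (∑ j : Fin n,
        (-(B : ℂ) - 1 / 2 + I * lam j + (2 * (n : ℂ) + 1 - 2 * (((j : ℕ) : ℂ) + 1)) / 2)
          * (y j : ℂ)))
      = ∏ j ∈ Finset.range n,
          (-1) / (-(((j : ℕ) : ℂ) + 1) * ((B : ℂ) + 1 / 2)
            + I * (∑ l ∈ Finset.univ.filter (fun l : Fin n => n - (j + 1) ≤ (l : ℕ)), lam l)
            + (((j : ℕ) : ℂ) + 1) ^ 2 / 2) :=
  simplex_exponential_integral_general n B lam hconv
end

section
/- Let n≥1 and let k_1,…,k_n, m_1,…,m_n ∈ ℂ with k_p ≠ 0 and m_p ≠ 0 for all p. Set X_{2p−1} = m_p + 2 i k_p and X_{2p} = m_p − 2 i k_p for 1≤p≤n, and assume X_i + X_j ≠ 0 for all 1≤i<j≤2n. For p ≠ q define D_{p,q} = [ (4(k_p−k_q)² + (m_p−m_q)²)/(4(k_p−k_q)² + (m_p+m_q)²) ] · [ (4(k_p+k_q)² + (m_p−m_q)²)/(4(k_p+k_q)² + (m_p+m_q)²) ]. Then Π_{1≤p<q≤n} D_{p,q} = Π_{j=1}^n ( m_j/(2 i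 k_j) ) · Π_{1≤i<j≤2n} (X_i − X_j)/(X_i + X_j). -/
open Complex Finset

private def idx2 (n : ℕ) (p : Fin n) (a : Fin 2) : Fin (2 * n) :=
  ⟨2 * (p : ℕ) + (a : ℕ), by have := p.isLt; have := a.isLt; omega⟩

private lemma key (A B C D : ℂ)
    (hQ1 : (A + 2*I*B) + (C + 2*I*D) ≠ 0) (hQ2 : (A + 2*I*B) + (C - 2*I*D) ≠ 0)
    (hQ3 : (A - 2*I*B) + (C + 2*I*D) ≠ 0) (hQ4 : (A - 2*I*B) + (C - 2*I*D) ≠ 0) :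
    (4*(B-D)^2 + (A-C)^2) / (4*(B-D)^2 + (A+C)^2) *
      ((4*(B+D)^2 + (A-C)^2) / (4*(B+D)^2 + (A+C)^2))
    = ((A + 2*I*B) - (C + 2*I*D)) / ((A + 2*I*B) + (C + 2*I*D)) *
      (((A + 2*I*B) - (C - 2*I*D)) / ((A + 2*I*B) + (C - 2*I*D)) *
       (((A - 2*I*B) - (C + 2*I*D)) / ((A - 2*I*B) + (C + 2*I*D)) *
        (((A - 2*I*B) - (C - 2*I*D)) / ((A - 2*I*B) + (C - 2*I*D))))) := by
  rw [show (4:ℂ)*(B-D)^2 + (A-C)^2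
        = ((A + 2*I*B) - (C + 2*I*D)) * ((A - 2*I*B) - (C - 2*I*D)) from by
      linear_combination (4*(B-D)^2) * Complex.I_sq,
    show (4:ℂ)*(B-D)^2 + (A+C)^2
        = ((A + 2*I*B) + (C - 2*I*D)) * ((A - 2*I*B) + (C + 2*I*D)) from by
      linear_combination (4*(B-D)^2) * Complex.I_sq,
    show (4:ℂ)*(B+D)^2 + (A-C)^2
        = ((A + 2*I*B) - (C - 2*I*D)) * ((A - 2*I*B) - (C + 2*I*D)) from by
      linear_combination (4*(B+D)^2) * Complex.I_sq,
    show (4:ℂ)*(B+D)^2 + (A+C)^2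
        = ((A + 2*I*B) + (C + 2*I*D)) * ((A - 2*I*B) + (C - 2*I*D)) from by
      linear_combination (4*(B+D)^2) * Complex.I_sq]
  field_simp

/-- **The norm factor `Π_{p<q} D_{p,q}` as a Schur Pfaffian product.**
With `X_{2p−1} = m_p + 2ik_p`, `X_{2p} = m_p − 2ik_p` (here 0-indexed:
`X(2p) = m_p + 2ik_p`, `X(2p+1) = m_p − 2ik_p`), one has
`Π_{p<q} D_{p,q} = Π_j (m_j/(2ik_j)) · Π_{i<j} (X_i − X_j)/(X_i + X_j)`. -/
theorem norm_product_as_schur (n : ℕ) (hn : 1 ≤ n) (k m : Fin n → ℂ)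
    (hk : ∀ p, k p ≠ 0) (hm : ∀ p, m p ≠ 0)
    (X : Fin (2 * n) → ℂ)
    (hX1 : ∀ p : Fin n, X ⟨2 * (p : ℕ), by have := p.isLt; omega⟩ = m p + 2 * I * k p)
    (hX2 : ∀ p : Fin n, X ⟨2 * (p : ℕ) + 1, by have := p.isLt; omega⟩ = m p - 2 * I * k p)
    (hsum : ∀ i j : Fin (2 * n), i < j → X i + X j ≠ 0) :
    (∏ pq ∈ Finset.univ.filter (fun pq : Fin n × Fin n => pq.1 < pq.2),
      (((4 * (k pq.1 - k pq.2) ^ 2 + (m pq.1 - m pq.2) ^ 2)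
          / (4 * (k pq.1 - k pq.2) ^ 2 + (m pq.1 + m pq.2) ^ 2)) *
       ((4 * (k pq.1 + k pq.2) ^ 2 + (m pq.1 - m pq.2) ^ 2)
          / (4 * (k pq.1 + k pq.2) ^ 2 + (m pq.1 + m pq.2) ^ 2))))
    = (∏ j : Fin n, m j / (2 * I * k j)) *
        ∏ ij ∈ Finset.univ.filter (fun ij : Fin (2 * n) × Fin (2 * n) => ij.1 < ij.2),
          (X ij.1 - X ij.2) / (X ij.1 + X ij.2) := by
  -- values of X at the structured indices
  have e0 : ∀ p : Fin n, X (idx2 n p 0) = m p + 2 * I * k p := by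
    intro p
    have h := hX1 p
    have he : idx2 n p 0 = ⟨2 * (p : ℕ), by have := p.isLt; omega⟩ := by
      simp [idx2]
    rw [he]; exact h
  have e1 : ∀ p : Fin n, X (idx2 n p 1) = m p - 2 * I * k p := by
    intro p
    have h := hX2 p
    have he : idx2 n p 1 = ⟨2 * (p : ℕ) + 1, by have := p.isLt; omega⟩ := by
      simp [idx2]
    rw [he]; exact h
  have hlt_idx : ∀ (p q : Fin n) (a b : Fin 2), p < q → idx2 n p a < idx2 n q b := by
    intro p q a b h
    have := a.isLt; have := b.isLt
    have hpq : (p : ℕ) < (q : ℕ) := h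
    simp only [idx2, Fin.lt_def]
    omega
  have hdlt : ∀ p : Fin n, idx2 n p 0 < idx2 n p 1 := by
    intro p; simp [idx2, Fin.lt_def]
  have h2I : (2 : ℂ) * I ≠ 0 := by simp [I_ne_zero]
  have hden : ∀ p, (2 : ℂ) * I * k p ≠ 0 := fun p => mul_ne_zero h2I (hk p)
  -- split the big product over pairs into diagonal and cross parts
  rw [← Finset.prod_filter_mul_prod_filter_not
      (Finset.univ.filter (fun ij : Fin (2*n) × Fin (2*n) => ij.1 < ij.2))
      (fun ij => (ij.1 : ℕ) / 2 = (ij.2 : ℕ) / 2)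
      (fun ij => (X ij.1 - X ij.2) / (X ij.1 + X ij.2))]
  -- diagonal part
  have hDiag : ∏ ij ∈ ((Finset.univ.filter (fun ij : Fin (2*n) × Fin (2*n) => ij.1 < ij.2)).filter
        (fun ij => (ij.1 : ℕ) / 2 = (ij.2 : ℕ) / 2)),
      (X ij.1 - X ij.2) / (X ij.1 + X ij.2)
      = ∏ p : Fin n, (2 * I * k p) / (m p) := by
    refine Finset.prod_nbij' (fun ij => (⟨(ij.1 : ℕ) / 2, by have := ij.1.isLt; omega⟩ : Fin n))
      (fun p => (idx2 n p 0, idx2 n p 1)) ?_ ?_ ?_ ?_ ?_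
    · intro a _; exact Finset.mem_univ _
    · intro p _
      simp only [Finset.mem_filter, Finset.mem_univ, true_and, idx2]
      constructor
      · exact hdlt p
      · omega
    · intro ij hij
      simp only [Finset.mem_filter, Finset.mem_univ, true_and, Fin.lt_def] at hij
      obtain ⟨hlt, hdiv⟩ := hij
      have h1 := ij.1.isLt; have h2 := ij.2.isLt
      ext <;> simp only [idx2] <;> omega
    · intro p _
      ext
      simp [idx2]
    · intro ij hij
      simp only [Finset.mem_filter, Finset.mem_univ, true_and, Fin.lt_def] at hij
      obtain ⟨hlt, hdiv⟩ := hij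
      have h1 := ij.1.isLt; have h2 := ij.2.isLt
      set p : Fin n := ⟨(ij.1 : ℕ)/2, by omega⟩ with hp
      have hXi : X ij.1 = m p + 2*I*k p := by
        rw [show ij.1 = idx2 n p 0 from by ext; simp only [idx2, hp]; omega]
        exact e0 p
      have hXj : X ij.2 = m p - 2*I*k p := by
        rw [show ij.2 = idx2 n p 1 from by ext; simp only [idx2, hp]; omega]
        exact e1 p
      show (X ij.1 - X ij.2) / (X ij.1 + X ij.2) = 2 * I * k p / m p
      rw [hXi, hXj,
          show m p + 2*I*k p - (m p - 2*I*k p) = 2 * (2*I*k p) by ring,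
          show m p + 2*I*k p + (m p - 2*I*k p) = 2 * (m p) by ring,
          mul_div_mul_left _ _ (two_ne_zero)]
  rw [hDiag]
  -- the diagonal part cancels the first product on the RHS
  rw [← mul_assoc, ← Finset.prod_mul_distrib]
  have hone : ∀ p : Fin n, m p / (2*I*k p) * ((2*I*k p) / m p) = 1 := by
    intro p
    rw [div_mul_div_comm, mul_comm (2*I*k p) (m p),
        div_self (mul_ne_zero (hm p) (hden p))]
  simp only [hone, Finset.prod_const_one, one_mul]
  -- cross part
  have hQ : ∀ (p q : Fin n) (a b : Fin 2), p < q → X (idx2 n p a) + X (idx2 n q b) ≠ 0 :=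
    fun p q a b h => hsum _ _ (hlt_idx p q a b h)
  -- rewrite each D_{p,q} as the product of the four Schur factors, then reindex
  have hstep : ∀ pq ∈ Finset.univ.filter (fun pq : Fin n × Fin n => pq.1 < pq.2),
      (((4 * (k pq.1 - k pq.2) ^ 2 + (m pq.1 - m pq.2) ^ 2)
          / (4 * (k pq.1 - k pq.2) ^ 2 + (m pq.1 + m pq.2) ^ 2)) *
       ((4 * (k pq.1 + k pq.2) ^ 2 + (m pq.1 - m pq.2) ^ 2)
          / (4 * (k pq.1 + k pq.2) ^ 2 + (m pq.1 + m pq.2) ^ 2)))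
      = ∏ ab : Fin 2 × Fin 2,
          (X (idx2 n pq.1 ab.1) - X (idx2 n pq.2 ab.2))
            / (X (idx2 n pq.1 ab.1) + X (idx2 n pq.2 ab.2)) := by
    rintro ⟨p, q⟩ hpq
    simp only [Finset.mem_filter, Finset.mem_univ, true_and] at hpq
    have hq1 := hQ p q 0 0 hpq
    have hq2 := hQ p q 0 1 hpq
    have hq3 := hQ p q 1 0 hpq
    have hq4 := hQ p q 1 1 hpq
    rw [e0 p, e0 q] at hq1
    rw [e0 p, e1 q] at hq2
    rw [e1 p, e0 q] at hq3
    rw [e1 p, e1 q] at hq4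
    rw [← Finset.univ_product_univ, Finset.prod_product]
    rw [Fin.prod_univ_two]
    rw [Fin.prod_univ_two, Fin.prod_univ_two]
    simp only [e0 p, e1 p, e0 q, e1 q]
    linear_combination key (m p) (k p) (m q) (k q) hq1 hq2 hq3 hq4
  rw [Finset.prod_congr rfl hstep]
  rw [← Finset.prod_product
      (Finset.univ.filter (fun pq : Fin n × Fin n => pq.1 < pq.2))
      (Finset.univ : Finset (Fin 2 × Fin 2))
      (fun x : (Fin n × Fin n) × (Fin 2 × Fin 2) =>
        (X (idx2 n x.1.1 x.2.1) - X (idx2 n x.1.2 x.2.2))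
          / (X (idx2 n x.1.1 x.2.1) + X (idx2 n x.1.2 x.2.2)))]
  refine Finset.prod_nbij'
    (fun x : (Fin n × Fin n) × (Fin 2 × Fin 2) => (idx2 n x.1.1 x.2.1, idx2 n x.1.2 x.2.2))
    (fun ij => ((⟨(ij.1 : ℕ) / 2, by have := ij.1.isLt; omega⟩,
                 ⟨(ij.2 : ℕ) / 2, by have := ij.2.isLt; omega⟩),
                (⟨(ij.1 : ℕ) % 2, by omega⟩, ⟨(ij.2 : ℕ) % 2, by omega⟩)))
    ?_ ?_ ?_ ?_ ?_
  · rintro ⟨⟨p, q⟩, ⟨a, b⟩⟩ hx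
    simp only [Finset.mem_product, Finset.mem_filter, Finset.mem_univ, true_and, and_true] at hx
    simp only [Finset.mem_filter, Finset.mem_univ, true_and]
    refine ⟨hlt_idx p q a b hx, ?_⟩
    have := a.isLt; have := b.isLt
    have hpq : (p : ℕ) < (q : ℕ) := hx
    simp only [idx2]
    omega
  · rintro ⟨i, j⟩ hij
    simp only [Finset.mem_filter, Finset.mem_univ, true_and, Fin.lt_def] at hij
    obtain ⟨hlt, hdiv⟩ := hij
    simp only [Finset.mem_product, Finset.mem_filter, Finset.mem_univ, true_and, and_true,
      Fin.lt_def]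
    omega
  · rintro ⟨⟨p, q⟩, ⟨a, b⟩⟩ hx
    have := a.isLt; have := b.isLt
    have := p.isLt; have := q.isLt
    simp only [idx2, Prod.mk.injEq]
    refine ⟨⟨?_, ?_⟩, ?_, ?_⟩ <;> ext <;> simp <;> omega
  · rintro ⟨i, j⟩ hij
    have := i.isLt; have := j.isLt
    simp only [idx2, Prod.mk.injEq]
    constructor <;> ext <;> simp <;> omega
  · rintro ⟨⟨p, q⟩, ⟨a, b⟩⟩ _
    rfl
end

section
/- Let m ≥ 1 be an integer and k, A, B ∈ ℂ with k ≠ 0. Set w = i k + (1−m)/2, and assume that none of the complex numbers 2ik+m, −2ik+m, (1±m)/2 + A ± ik, (1±m)/2 + B ± ik, w, 1−w, w+m, 1−w−m, B−w−m+1, B+w, B−w+1, B+w+m, A−w−m+1, A+w, A−w+1, A+w+m is a nonpositive integer, and that (w)_m ≠ 0. Then (1/(4ik)) · (2k/π) · sinh(2πk) · Γ(2ik+m) Γ(−2ik+m) · [Γ((1−m)/2+A+ik) Γ((1−m)/2+A−ik)]/[Γ((1+m)/2+A+ik) Γ((1+m)/2+A−ik)] · [Γ((1−m)/2+B+ik)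 Γ((1−m)/2+B−ik)]/[Γ((1+m)/2+B+ik) Γ((1+m)/2+B−ik)] = 2^{2m} · (w+1/2)_{m−1}/(4 (w)_m) · [Γ(1−w) Γ(w+m)]/[Γ(1−w−m) Γ(w)] · [Γ(B−w−m+1) Γ(B+w)]/[Γ(B−w+1) Γ(B+w+m)] · [Γ(A−w−m+1) Γ(A+w)]/[Γ(A−w+1) Γ(A+w+m)]. (This identity shows that the Bethe-ansatz string weight B_{k,m}/(4ik) coincides with the residue factor arising from the log-gamma polymer moment formula.) -/
open Complex Finset

/-- The rising factorial (Pochhammer symbol) `(x)_ℓ = x(x+1)⋯(x+ℓ−1)`, with `(x)_0 = 1`. -/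
noncomputable def risingFactorial (x : ℂ) (l : ℕ) : ℂ := ∏ i ∈ Finset.range l, (x + (i : ℂ))

/-! With `I * k = w + (m - 1) / 2` the `A`- and `B`-factors of the two sides are the same Gamma
ratios with their arguments rewritten. On the left, `sinh (2πk) = -(-1)^(m-1) sin (2πw) I`, and the
reflection formula together with `Γ(2w + 2m - 1) = (2w)_{2m-1} Γ(2w)` turns the rest into
`(-1)^m (2w)_{2m-1} / 2`. Splitting the even and odd factors,
`(2w)_{2m-1} = 2^{2m-1} (w)_m (w + 1/2)_{m-1}`; on the right,
`Γ(1 - w) / Γ(1 - w - m) = (1 - w - m)_m = (-1)^m (w)_m`, so both sides equal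
`(-1)^m 4^(m-1) (w)_m (w + 1/2)_{m-1}`. -/

open scoped Real

theorem risingFactorial_eq_ascPochhammer_eval (x : ℂ) (l : ℕ) :
    risingFactorial x l = (ascPochhammer ℂ l).eval x := by
  induction l with
  | zero => simp [risingFactorial]
  | succ l ih =>
    rw [risingFactorial, prod_range_succ, ← risingFactorial, ih, ascPochhammer_succ_eval]

namespace Complex

theorem ascPochhammer_eval_two_mul_odd (w : ℂ) (n : ℕ) :
    (ascPochhammer ℂ (2 * n + 1)).eval (2 * w)
      = 2 ^ (2 * n + 1) * (ascPochhammer ℂ (n + 1)).eval w *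
          (ascPochhammer ℂ n).eval (w + 1 / 2) := by
  induction n with
  | zero => simp
  | succ n ih =>
    rw [show 2 * (n + 1) + 1 = 2 * n + 1 + 1 + 1 by ring]
    simp only [ascPochhammer_succ_eval, ih]
    push_cast
    ring

theorem ascPochhammer_eval_one_sub_sub (w : ℂ) (m : ℕ) :
    (ascPochhammer ℂ m).eval (1 - w - m) = (-1) ^ m * (ascPochhammer ℂ m).eval w := by
  rw [show 1 - w - m = -(w + m - 1) by ring, ascPochhammer_eval_neg_eq_descPochhammer,
    descPochhammer_eval_eq_ascPochhammer, show w + m - 1 - m + 1 = w by ring]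

theorem ascPochhammer_eval_ne_zero {w : ℂ} (hw : ∀ t : ℕ, w ≠ -t) (m : ℕ) :
    (ascPochhammer ℂ m).eval w ≠ 0 := by
  rw [Ne, ascPochhammer_eval_eq_zero_iff]
  rintro ⟨t, -, ht⟩
  exact hw t (by rw [ht, neg_neg])

theorem Gamma_one_sub_mul_Gamma_add_nat_div {w : ℂ} (m : ℕ) (hw : ∀ t : ℕ, w ≠ -t)
    (hw' : ∀ t : ℕ, 1 - w - m ≠ -t) :
    Gamma (1 - w) * Gamma (w + m) / (Gamma (1 - w - m) * Gamma w)
      = (-1) ^ m * (ascPochhammer ℂ m).eval w ^ 2 := by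
  have hshift := Gamma_add_nat_div_Gamma_eq (n := m) _ hw'
  rw [sub_add_cancel, ascPochhammer_eval_one_sub_sub] at hshift
  rw [mul_div_mul_comm, hshift, Gamma_add_nat_div_Gamma_eq _ hw]
  ring

theorem sin_mul_Gamma_add_nat_mul_Gamma_one_sub (z : ℂ) (n : ℕ) (h₁ : ∀ t : ℕ, z + n ≠ -t)
    (h₂ : ∀ t : ℕ, 1 - z ≠ -t) :
    sin (π * z) * Gamma (z + n) * Gamma (1 - z) = π * (ascPochhammer ℂ n).eval z := by
  by_cases hz : ∀ t : ℕ, z ≠ -t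
  · -- `Gamma_mul_Gamma_one_sub` also holds where `sin (π * z) = 0`, with junk value `π / 0 = 0`.
    have hs : sin (π * z) ≠ 0 := by
      intro hs
      have hrefl := Gamma_mul_Gamma_one_sub z
      rw [hs, div_zero] at hrefl
      exact mul_ne_zero (Gamma_ne_zero hz) (Gamma_ne_zero h₂) hrefl
    calc sin (π * z) * Gamma (z + n) * Gamma (1 - z)
        = sin (π * z) * (Gamma (z + n) / Gamma z) * (Gamma z * Gamma (1 - z)) := by
          field_simp [Gamma_ne_zero hz]
      _ = π * (ascPochhammer ℂ n).eval z := by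
          rw [Gamma_add_nat_div_Gamma_eq z hz, Gamma_mul_Gamma_one_sub]
          field_simp
  · push Not at hz
    obtain ⟨t, rfl⟩ := hz
    have ht : t < n := by
      by_contra! hnt
      exact h₁ (t - n) (by push_cast [Nat.cast_sub hnt]; ring)
    rw [ascPochhammer_eval_neg_coe_nat_of_lt ht, mul_neg, sin_neg, mul_comm (π : ℂ), sin_nat_mul_pi]
    simp

theorem one_div_mul_sinh_mul_Gamma_mul_Gamma {n : ℕ} {k w : ℂ} (hk : k ≠ 0)
    (hw : I * k = w + n / 2)
    (h₁ : ∀ t : ℕ, 2 * w + (2 * n + 1 : ℕ) ≠ -t) (h₂ : ∀ t : ℕ, 1 - 2 * w ≠ -t) :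
    1 / (4 * I * k) * (2 * k / π) * sinh (2 * π * k) * Gamma (2 * w + (2 * n + 1 : ℕ)) *
        Gamma (1 - 2 * w)
      = (-1) ^ (n + 1) * 2 ^ (2 * n) * (ascPochhammer ℂ (n + 1)).eval w *
          (ascPochhammer ℂ n).eval (w + 1 / 2) := by
  have hsinh : sinh (2 * π * k) = -((-1) ^ n * sin (π * (2 * w))) * I := by
    rw [show 2 * π * k = -(π * (2 * w) + n * π) * I by
        linear_combination (-2 * π * I) * hw + (2 * π * k) * I_sq,
      sinh_mul_I, sin_neg, sin_antiperiodic.add_nat_mul_eq]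
  have hrefl := sin_mul_Gamma_add_nat_mul_Gamma_one_sub (2 * w) (2 * n + 1) h₁ h₂
  rw [ascPochhammer_eval_two_mul_odd] at hrefl
  have hπ : (π : ℂ) ≠ 0 := ofReal_ne_zero.mpr Real.pi_ne_zero
  calc 1 / (4 * I * k) * (2 * k / π) * sinh (2 * π * k) * Gamma (2 * w + (2 * n + 1 : ℕ)) *
        Gamma (1 - 2 * w)
      = -(-1) ^ n / (2 * π) *
          (sin (π * (2 * w)) * Gamma (2 * w + (2 * n + 1 : ℕ)) * Gamma (1 - 2 * w)) := by
        rw [hsinh]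
        field_simp
        ring
    _ = _ := by
        rw [hrefl]
        field_simp
        ring

theorem Gamma_ratio_eq_of_eq_I_mul_add {C k w : ℂ} {m : ℕ} (hw : w = I * k + (1 - m) / 2) :
    Gamma ((1 - m) / 2 + C + I * k) * Gamma ((1 - m) / 2 + C - I * k) /
        (Gamma ((1 + m) / 2 + C + I * k) * Gamma ((1 + m) / 2 + C - I * k))
      = Gamma (C - w - m + 1) * Gamma (C + w) / (Gamma (C - w + 1) * Gamma (C + w + m)) := by
  subst hw
  rw [mul_comm (Gamma (C - _ - m + 1)), mul_comm (Gamma (C - _ + 1))]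
  congr 3 <;> ring

end Complex

theorem string_weight_eq_residue_factor_general (m : ℕ) (hm : 1 ≤ m) (k A B : ℂ) (hk : k ≠ 0)
    (w : ℂ) (hw : w = I * k + (1 - (m : ℂ)) / 2)
    (hpoles : ∀ z ∈ [2 * I * k + (m : ℂ), -2 * I * k + (m : ℂ),
        (1 + (m : ℂ)) / 2 + A + I * k, (1 + (m : ℂ)) / 2 + A - I * k,
        (1 - (m : ℂ)) / 2 + A + I * k, (1 - (m : ℂ)) / 2 + A - I * k,
        (1 + (m : ℂ)) / 2 + B + I * k, (1 + (m : ℂ)) / 2 + B - I * k,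
        (1 - (m : ℂ)) / 2 + B + I * k, (1 - (m : ℂ)) / 2 + B - I * k,
        w, 1 - w, w + (m : ℂ), 1 - w - (m : ℂ),
        B - w - (m : ℂ) + 1, B + w, B - w + 1, B + w + (m : ℂ),
        A - w - (m : ℂ) + 1, A + w, A - w + 1, A + w + (m : ℂ)],
      ∀ n : ℕ, z ≠ -(n : ℂ)) :
    (1 / (4 * I * k)) * (2 * k / (Real.pi : ℂ)) * Complex.sinh (2 * (Real.pi : ℂ) * k) *
      Complex.Gamma (2 * I * k + (m : ℂ)) * Complex.Gamma (-2 * I * k + (m : ℂ)) *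
      ((Complex.Gamma ((1 - (m : ℂ)) / 2 + A + I * k) *
          Complex.Gamma ((1 - (m : ℂ)) / 2 + A - I * k)) /
        (Complex.Gamma ((1 + (m : ℂ)) / 2 + A + I * k) *
          Complex.Gamma ((1 + (m : ℂ)) / 2 + A - I * k))) *
      ((Complex.Gamma ((1 - (m : ℂ)) / 2 + B + I * k) *
          Complex.Gamma ((1 - (m : ℂ)) / 2 + B - I * k)) /
        (Complex.Gamma ((1 + (m : ℂ)) / 2 + B + I * k) *
          Complex.Gamma ((1 + (m : ℂ)) / 2 + B - I * k)))
    = 2 ^ (2 * m) * (risingFactorial (w + 1 / 2) (m - 1) / (4 * risingFactorial w m)) *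
        ((Complex.Gamma (1 - w) * Complex.Gamma (w + (m : ℂ))) /
          (Complex.Gamma (1 - w - (m : ℂ)) * Complex.Gamma w)) *
        ((Complex.Gamma (B - w - (m : ℂ) + 1) * Complex.Gamma (B + w)) /
          (Complex.Gamma (B - w + 1) * Complex.Gamma (B + w + (m : ℂ)))) *
        ((Complex.Gamma (A - w - (m : ℂ) + 1) * Complex.Gamma (A + w)) /
          (Complex.Gamma (A - w + 1) * Complex.Gamma (A + w + (m : ℂ)))) := by
  obtain ⟨n, rfl⟩ : ∃ n, m = n + 1 := ⟨m - 1, by omega⟩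
  have hik : I * k = w + n / 2 := by rw [hw]; push_cast; ring
  have hplus : 2 * I * k + ((n + 1 : ℕ) : ℂ) = 2 * w + (2 * n + 1 : ℕ) := by
    push_cast; linear_combination 2 * hik
  have hminus : -2 * I * k + ((n + 1 : ℕ) : ℂ) = 1 - 2 * w := by
    push_cast; linear_combination (-2) * hik
  have hw₀ := hpoles w (by simp)
  have hpole₁ := hpoles (2 * I * k + ((n + 1 : ℕ) : ℂ)) (by simp)
  have hpole₂ := hpoles (-2 * I * k + ((n + 1 : ℕ) : ℂ)) (by simp)
  have hpole₃ := hpoles (1 - w - ((n + 1 : ℕ) : ℂ)) (by simp)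
  rw [hplus] at hpole₁
  rw [hminus] at hpole₂
  rw [Gamma_ratio_eq_of_eq_I_mul_add hw, Gamma_ratio_eq_of_eq_I_mul_add hw, hplus, hminus,
    one_div_mul_sinh_mul_Gamma_mul_Gamma hk hik hpole₁ hpole₂,
    Gamma_one_sub_mul_Gamma_add_nat_div _ hw₀ hpole₃,
    risingFactorial_eq_ascPochhammer_eval, risingFactorial_eq_ascPochhammer_eval,
    Nat.add_sub_cancel]
  have hpoch := ascPochhammer_eval_ne_zero hw₀ (n + 1)
  generalize Gamma (B - w - ((n + 1 : ℕ) : ℂ) + 1) * Gamma (B + w) /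
    (Gamma (B - w + 1) * Gamma (B + w + ((n + 1 : ℕ) : ℂ))) = RB
  generalize Gamma (A - w - ((n + 1 : ℕ) : ℂ) + 1) * Gamma (A + w) /
    (Gamma (A - w + 1) * Gamma (A + w + ((n + 1 : ℕ) : ℂ))) = RA
  field_simp
  ring

/-- **Equality of the Bethe-ansatz string weight `B_{k,m}/(4ik)` with the residue factor
from the log-gamma polymer moment formula.**  With `w = ik + (1−m)/2`, and assuming none
of the listed arguments is a nonpositive integer and `(w)_m ≠ 0`,
`(1/(4ik))·(2k/π) sinh(2πk) Γ(2ik+m)Γ(−2ik+m)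
  · [Γ((1−m)/2+A+ik)Γ((1−m)/2+A−ik)]/[Γ((1+m)/2+A+ik)Γ((1+m)/2+A−ik)]
  · [Γ((1−m)/2+B+ik)Γ((1−m)/2+B−ik)]/[Γ((1+m)/2+B+ik)Γ((1+m)/2+B−ik)]
 = 2^{2m} (w+1/2)_{m−1}/(4(w)_m) · [Γ(1−w)Γ(w+m)]/[Γ(1−w−m)Γ(w)]
  · [Γ(B−w−m+1)Γ(B+w)]/[Γ(B−w+1)Γ(B+w+m)] · [Γ(A−w−m+1)Γ(A+w)]/[Γ(A−w+1)Γ(A+w+m)]`. -/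
theorem string_weight_eq_residue_factor (m : ℕ) (hm : 1 ≤ m) (k A B : ℂ) (hk : k ≠ 0)
    (w : ℂ) (hw : w = I * k + (1 - (m : ℂ)) / 2)
    (hpoles : ∀ z ∈ [2 * I * k + (m : ℂ), -2 * I * k + (m : ℂ),
        (1 + (m : ℂ)) / 2 + A + I * k, (1 + (m : ℂ)) / 2 + A - I * k,
        (1 - (m : ℂ)) / 2 + A + I * k, (1 - (m : ℂ)) / 2 + A - I * k,
        (1 + (m : ℂ)) / 2 + B + I * k, (1 + (m : ℂ)) / 2 + B - I * k,
        (1 - (m : ℂ)) / 2 + B + I * k, (1 - (m : ℂ)) / 2 + B - I * k,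
        w, 1 - w, w + (m : ℂ), 1 - w - (m : ℂ),
        B - w - (m : ℂ) + 1, B + w, B - w + 1, B + w + (m : ℂ),
        A - w - (m : ℂ) + 1, A + w, A - w + 1, A + w + (m : ℂ)],
      ∀ n : ℕ, z ≠ -(n : ℂ))
    (hpoch : risingFactorial w m ≠ 0) :
    (1 / (4 * I * k)) * (2 * k / (Real.pi : ℂ)) * Complex.sinh (2 * (Real.pi : ℂ) * k) *
      Complex.Gamma (2 * I * k + (m : ℂ)) * Complex.Gamma (-2 * I * k + (m : ℂ)) *
      ((Complex.Gamma ((1 - (m : ℂ)) / 2 + A + I * k) *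
          Complex.Gamma ((1 - (m : ℂ)) / 2 + A - I * k)) /
        (Complex.Gamma ((1 + (m : ℂ)) / 2 + A + I * k) *
          Complex.Gamma ((1 + (m : ℂ)) / 2 + A - I * k))) *
      ((Complex.Gamma ((1 - (m : ℂ)) / 2 + B + I * k) *
          Complex.Gamma ((1 - (m : ℂ)) / 2 + B - I * k)) /
        (Complex.Gamma ((1 + (m : ℂ)) / 2 + B + I * k) *
          Complex.Gamma ((1 + (m : ℂ)) / 2 + B - I * k)))
    = 2 ^ (2 * m) * (risingFactorial (w + 1 / 2) (m - 1) / (4 * risingFactorial w m)) *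
        ((Complex.Gamma (1 - w) * Complex.Gamma (w + (m : ℂ))) /
          (Complex.Gamma (1 - w - (m : ℂ)) * Complex.Gamma w)) *
        ((Complex.Gamma (B - w - (m : ℂ) + 1) * Complex.Gamma (B + w)) /
          (Complex.Gamma (B - w + 1) * Complex.Gamma (B + w + (m : ℂ)))) *
        ((Complex.Gamma (A - w - (m : ℂ) + 1) * Complex.Gamma (A + w)) /
          (Complex.Gamma (A - w + 1) * Complex.Gamma (A + w + (m : ℂ)))) :=
  string_weight_eq_residue_factor_general m hm k A B hk w hw hpoles
end

section
/- Let a, b > 0 with a ≠ b, let c ∈ (0, min(a,b)) and c' > max(a,b), and let x ∈ ℝ. Set R(z) = (a+z)(b+z)/((a−z)(b−z)) and f(z) = R(z) e^{−xz + z³/3}. Then both integrals below converge absolutely and (1/2π) ∫_ℝ f(c + iy) dy = (1/2π) ∫_ℝ f(c' + iy) dy + 2 ((a+b)/(a−b)) · ( b e^{−xb + b³/3} − a e^{−xa + a³/3} ). (This is the residue decomposition obtained by moving the contour in the definition of the function A^{(a,b)} across the poles at z = a and z = b.) -/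
/-!
Subtracting from `f` its principal parts at the simple poles `a` and `b` leaves an entire
function `G`. Cauchy's theorem on the rectangles `[c, c'] × [-T, T]` shows that the truncated
vertical integrals of `G` over the two lines have the same limit, since `G` decays uniformly on
the horizontal sides: `e^{z³/3}` decays like a Gaussian there and the principal parts like
`1/|Im z|`. The principal part `r/(z - u)` is not integrable on a vertical line, but its
symmetric truncated integral over `σ + iℝ` is `2r·arctan(T/(σ - u)) → ±πr`; crossing the pole
therefore contributes `2πr`.
-/

open Complex MeasureTheory Real

/-- `f(z) = (a+z)(b+z)/((a−z)(b−z)) · e^{−xz + z³/3}`. -/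
noncomputable def fShift (a b x : ℝ) (z : ℂ) : ℂ :=
  ((a + z) * (b + z) / ((a - z) * (b - z))) * Complex.exp (-(x : ℂ) * z + z ^ 3 / 3)

open Filter Topology Set
open scoped Interval

theorem tendsto_integral_vertical_sub_of_differentiable {G : ℂ → ℂ} (hG : Differentiable ℂ G)
    (σ₁ σ₂ : ℝ) {B : ℝ → ℝ} (hB : Tendsto B (cocompact ℝ) (𝓝 0))
    (hGB : ∀ᶠ s : ℝ in cocompact ℝ, ∀ t ∈ [[σ₁, σ₂]], ‖G ((t : ℂ) + (s : ℂ) * I)‖ ≤ B s) :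
    Tendsto (fun T : ℝ => (∫ y in -T..T, G (σ₂ + y * I)) - ∫ y in -T..T, G (σ₁ + y * I))
      atTop (𝓝 0) := by
  have horizontal : Tendsto (fun s : ℝ => ∫ t in σ₁..σ₂, G (t + s * I)) (cocompact ℝ) (𝓝 0) := by
    refine squeeze_zero_norm' ?_ (by simpa using hB.mul_const |σ₂ - σ₁|)
    filter_upwards [hGB] with s hs
    exact intervalIntegral.norm_integral_le_of_norm_le_const fun t ht =>
      hs t (uIoc_subset_uIcc ht)
  have top := horizontal.comp (tendsto_id.mono_right atTop_le_cocompact)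
  have bot := horizontal.comp (tendsto_neg_atTop_atBot.mono_right atBot_le_cocompact)
  have rectangle (T : ℝ) := integral_boundary_rect_eq_zero_of_differentiableOn G
    ⟨σ₁, -T⟩ ⟨σ₂, T⟩ hG.differentiableOn
  simp only [smul_eq_mul] at rectangle
  convert (bot.sub top).const_mul I using 1
  · ext T
    simp only [Function.comp_apply, id]
    linear_combination (-I) * rectangle T +
      ((∫ y in -T..T, G (σ₂ + y * I)) - ∫ y in -T..T, G (σ₁ + y * I)) * I_sq
  · simp

lemma hasDerivAt_arctan_div_sub_log {k : ℝ} (hk : k ≠ 0) (y : ℝ) :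
    HasDerivAt (fun s : ℝ => (Real.arctan (s / k) : ℂ) - I / 2 * (Real.log (k ^ 2 + s ^ 2) : ℂ))
      ((k : ℂ) + y * I)⁻¹ y := by
  have hk2 : k ^ 2 + y ^ 2 ≠ 0 := by positivity
  have harctan := ((hasDerivAt_id y).div_const k).arctan
  have hlog := ((hasDerivAt_pow 2 y).const_add (k ^ 2)).log hk2
  refine (harctan.ofReal_comp.sub (hlog.ofReal_comp.const_mul (I / 2))).congr_deriv ?_
  have hkC : (k : ℂ) ≠ 0 := by exact_mod_cast hk
  have hk2C : (k : ℂ) ^ 2 + (y : ℂ) ^ 2 ≠ 0 := by exact_mod_cast hk2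
  have hkyI : (k : ℂ) + y * I ≠ 0 := by
    intro h; exact hk (by simpa using congrArg re h)
  rw [← mul_eq_one_iff_eq_inv₀ hkyI]
  simp only [id]
  push_cast
  field_simp
  ring_nf
  simp only [I_sq]
  ring

lemma integral_inv_ofReal_add_mul_I {k : ℝ} (hk : k ≠ 0) (T : ℝ) :
    ∫ y in -T..T, ((k : ℂ) + y * I)⁻¹ = 2 * Real.arctan (T / k) := by
  have hcont : Continuous fun y : ℝ => ((k : ℂ) + y * I)⁻¹ :=
    (by fun_prop : Continuous fun y : ℝ => (k : ℂ) + y * I).inv₀ fun y h =>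
      hk (by simpa using congrArg re h)
  rw [intervalIntegral.integral_eq_sub_of_hasDerivAt
    (fun y _ => hasDerivAt_arctan_div_sub_log hk y) (hcont.intervalIntegrable _ _)]
  simp only [neg_div, arctan_neg, neg_sq]
  push_cast
  ring

lemma tendsto_two_arctan_div_atTop {k : ℝ} (hk : 0 < k) :
    Tendsto (fun T : ℝ => 2 * Real.arctan (T / k)) atTop (𝓝 π) := by
  have := (tendsto_arctan_atTop.mono_right nhdsWithin_le_nhds).comp
    (tendsto_id.atTop_div_const hk)
  simpa [mul_div_cancel₀] using this.const_mul 2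

lemma tendsto_integral_inv_sub_integral_inv {σ₁ u σ₂ : ℝ} (h₁ : σ₁ < u) (h₂ : u < σ₂) :
    Tendsto (fun T : ℝ => (∫ y in -T..T, ((σ₂ : ℂ) + y * I - u)⁻¹) -
      ∫ y in -T..T, ((σ₁ : ℂ) + y * I - u)⁻¹) atTop (𝓝 (2 * π)) := by
  have shift (σ : ℝ) (y : ℝ) : (σ : ℂ) + y * I - u = ((σ - u : ℝ) : ℂ) + y * I := by
    push_cast; ring
  simp only [shift, integral_inv_ofReal_add_mul_I (sub_pos.2 h₂).ne',
    integral_inv_ofReal_add_mul_I (sub_neg.2 h₁).ne]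
  have hpos := tendsto_two_arctan_div_atTop (sub_pos.2 h₂)
  have hneg := tendsto_two_arctan_div_atTop (neg_pos.2 (sub_neg.2 h₁))
  simp only [div_neg, arctan_neg] at hneg
  convert (continuous_ofReal.tendsto _).comp (hpos.add hneg) using 2
  · simp only [Function.comp_apply]
    push_cast
    ring
  · push_cast
    ring

lemma norm_ofReal_add_le (u : ℝ) (z : ℂ) {d : ℝ} (hd : 0 < d) (hdz : d ≤ ‖(u : ℂ) - z‖) :
    ‖(u : ℂ) + z‖ ≤ (|u + z.re| / d + 1) * ‖(u : ℂ) - z‖ := by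
  have him : |z.im| ≤ ‖(u : ℂ) - z‖ := by
    simpa using abs_im_le_norm ((u : ℂ) - z)
  have hre : |u + z.re| ≤ |u + z.re| / d * ‖(u : ℂ) - z‖ := by
    rw [div_mul_eq_mul_div, le_div_iff₀ hd]
    exact mul_le_mul_of_nonneg_left hdz (abs_nonneg _)
  calc ‖(u : ℂ) + z‖ ≤ |((u : ℂ) + z).re| + |((u : ℂ) + z).im| := norm_le_abs_re_add_abs_im _
    _ = |u + z.re| + |z.im| := by simp
    _ ≤ (|u + z.re| / d + 1) * ‖(u : ℂ) - z‖ := by linarith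

noncomputable def cubicExp (x : ℝ) (z : ℂ) : ℂ := cexp (-(x : ℂ) * z + z ^ 3 / 3)

lemma differentiable_cubicExp (x : ℝ) : Differentiable ℂ (cubicExp x) := by
  unfold cubicExp; fun_prop

lemma norm_cubicExp (x : ℝ) (z : ℂ) :
    ‖cubicExp x z‖ = Real.exp (-x * z.re + z.re ^ 3 / 3 - z.re * z.im ^ 2) := by
  rw [cubicExp, norm_exp]
  congr 1
  simp [pow_succ, mul_re, mul_im]
  ring

lemma norm_fShift_le (a b x : ℝ) (z : ℂ) {d : ℝ} (hd : 0 < d) (hda : d ≤ ‖(a : ℂ) - z‖)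
    (hdb : d ≤ ‖(b : ℂ) - z‖) :
    ‖fShift a b x z‖ ≤ (|a + z.re| / d + 1) * (|b + z.re| / d + 1) *
      Real.exp (-x * z.re + z.re ^ 3 / 3 - z.re * z.im ^ 2) := by
  have hratio (u : ℝ) (hu : d ≤ ‖(u : ℂ) - z‖) :
      ‖((u : ℂ) + z) / ((u : ℂ) - z)‖ ≤ |u + z.re| / d + 1 := by
    rw [norm_div]
    exact div_le_of_le_mul₀ (norm_nonneg _) (by positivity) (norm_ofReal_add_le u z hd hu)
  rw [fShift, mul_div_mul_comm, ← cubicExp, norm_mul, norm_mul, norm_cubicExp]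
  gcongr
  · exact hratio a hda
  · exact hratio b hdb

lemma integrable_fShift_vertical (a b x : ℝ) {σ : ℝ} (hσ : 0 < σ) (ha : σ ≠ a) (hb : σ ≠ b) :
    Integrable fun y : ℝ => fShift a b x ((σ : ℂ) + (y : ℂ) * I) := by
  set d := min |a - σ| |b - σ|
  have hd : 0 < d := lt_min (abs_pos.2 (sub_ne_zero.2 ha.symm)) (abs_pos.2 (sub_ne_zero.2 hb.symm))
  have hdist (u : ℝ) (hdu : d ≤ |u - σ|) (y : ℝ) : d ≤ ‖(u : ℂ) - (σ + y * I)‖ :=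
    hdu.trans (by simpa using abs_re_le_norm ((u : ℂ) - (σ + y * I)))
  refine ((integrable_exp_neg_mul_sq hσ).const_mul ((|a + σ| / d + 1) * (|b + σ| / d + 1) *
    Real.exp (-x * σ + σ ^ 3 / 3))).mono' (by unfold fShift; fun_prop) (ae_of_all _ fun y => ?_)
  refine (norm_fShift_le a b x _ hd (hdist a (min_le_left _ _) y)
    (hdist b (min_le_right _ _) y)).trans_eq ?_
  have hre : ((σ : ℂ) + y * I).re = σ := by simp
  have him : ((σ : ℂ) + y * I).im = y := by simp
  rw [hre, him, mul_assoc _ (Real.exp _), ← Real.exp_add]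
  ring_nf

lemma exists_norm_fShift_horizontal_le (a b x σ₁ σ₂ : ℝ) :
    ∃ C, ∀ t ∈ Icc σ₁ σ₂, ∀ s : ℝ, 1 ≤ |s| →
      ‖fShift a b x ((t : ℂ) + (s : ℂ) * I)‖ ≤ C * Real.exp (-σ₁ * s ^ 2) := by
  obtain ⟨C, hC⟩ := isCompact_Icc.exists_bound_of_continuousOn (f := fun t : ℝ =>
    (|a + t| + 1) * (|b + t| + 1) * Real.exp (-x * t + t ^ 3 / 3)) (by fun_prop)
  refine ⟨C, fun t ht s hs => ?_⟩
  have hdist (u : ℝ) : 1 ≤ ‖(u : ℂ) - (t + s * I)‖ :=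
    hs.trans (by simpa using abs_im_le_norm ((u : ℂ) - (t + s * I)))
  have hre : ((t : ℂ) + s * I).re = t := by simp
  have him : ((t : ℂ) + s * I).im = s := by simp
  have hgauss : Real.exp (-t * s ^ 2) ≤ Real.exp (-σ₁ * s ^ 2) := by
    gcongr
    exact ht.1
  calc ‖fShift a b x ((t : ℂ) + (s : ℂ) * I)‖
      ≤ (|a + t| + 1) * (|b + t| + 1) * Real.exp (-x * t + t ^ 3 / 3 - t * s ^ 2) := by
        simpa only [hre, him, div_one] using norm_fShift_le a b x _ one_pos (hdist a) (hdist b)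
    _ = (|a + t| + 1) * (|b + t| + 1) * Real.exp (-x * t + t ^ 3 / 3) *
          Real.exp (-t * s ^ 2) := by
        rw [mul_assoc _ (Real.exp _), ← Real.exp_add]
        ring_nf
    _ ≤ C * Real.exp (-σ₁ * s ^ 2) :=
        mul_le_mul ((le_norm_self _).trans (hC t ht)) hgauss (by positivity)
          ((norm_nonneg _).trans (hC t ht))

/-- The residue of `(a+z)(b+z)/((a-z)(b-z))` at `z = a`; the one at `z = b` is
`ratioResidue b a`. -/
noncomputable def ratioResidue (a b : ℝ) : ℂ := 2 * a * (a + b) / (a - b)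

noncomputable def fShiftReg (a b x : ℝ) (z : ℂ) : ℂ :=
  cubicExp x z + ratioResidue a b * dslope (cubicExp x) a z +
    ratioResidue b a * dslope (cubicExp x) b z

lemma differentiable_fShiftReg (a b x : ℝ) : Differentiable ℂ (fShiftReg a b x) := by
  have hdslope (u : ℂ) : Differentiable ℂ (dslope (cubicExp x) u) :=
    differentiableOn_univ.1 <|
      (differentiableOn_dslope univ_mem).2 (differentiable_cubicExp x).differentiableOn
  unfold fShiftReg
  have := differentiable_cubicExp x
  fun_prop

/-- Partial fractions: `(a+z)(b+z)/((a-z)(b-z)) = 1 + rₐ/(z-a) + r_b/(z-b)`. -/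
lemma fShift_eq_fShiftReg_add {a b : ℝ} (hab : a ≠ b) (x : ℝ) {z : ℂ} (hza : z ≠ a)
    (hzb : z ≠ b) :
    fShift a b x z = fShiftReg a b x z + ratioResidue a b * cubicExp x a * (z - a)⁻¹ +
      ratioResidue b a * cubicExp x b * (z - b)⁻¹ := by
  have hab' : (a : ℂ) - b ≠ 0 := sub_ne_zero.2 (ofReal_injective.ne hab)
  have hba' : (b : ℂ) - a ≠ 0 := sub_ne_zero.2 (ofReal_injective.ne hab.symm)
  have haz' : (a : ℂ) - z ≠ 0 := sub_ne_zero.2 hza.symm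
  have hbz' : (b : ℂ) - z ≠ 0 := sub_ne_zero.2 hzb.symm
  rw [fShiftReg, dslope_of_ne _ hza, dslope_of_ne _ hzb, slope_def_field, slope_def_field,
    fShift, ratioResidue, ratioResidue, ← cubicExp]
  field_simp
  ring

lemma tendsto_integral_fShiftReg_vertical_sub {a b : ℝ} (hab : a ≠ b) (x : ℝ) {σ₁ σ₂ : ℝ}
    (hσ₁ : 0 < σ₁) (hσ : σ₁ ≤ σ₂) :
    Tendsto (fun T : ℝ => (∫ y in -T..T, fShiftReg a b x (σ₂ + y * I)) -
      ∫ y in -T..T, fShiftReg a b x (σ₁ + y * I)) atTop (𝓝 0) := by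
  obtain ⟨C, hC⟩ := exists_norm_fShift_horizontal_le a b x σ₁ σ₂
  set D := ‖ratioResidue a b * cubicExp x a‖ + ‖ratioResidue b a * cubicExp x b‖
  refine tendsto_integral_vertical_sub_of_differentiable (differentiable_fShiftReg a b x) σ₁ σ₂
    (B := fun s => C * Real.exp (-σ₁ * |s| ^ 2) + D / |s|) ?_ ?_
  · have hgauss : Tendsto (fun r : ℝ => Real.exp (-σ₁ * r ^ 2)) atTop (𝓝 0) :=
      tendsto_exp_atBot.comp <| (tendsto_pow_atTop two_ne_zero).const_mul_atTop_of_neg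
        (neg_neg_of_pos hσ₁)
    simpa only [mul_zero, add_zero, Function.comp_def, id, Real.norm_eq_abs] using
      ((hgauss.const_mul C).add ((tendsto_const_nhds (x := D)).div_atTop tendsto_id)).comp
        (tendsto_norm_cocompact_atTop (E := ℝ))
  · filter_upwards [(tendsto_norm_cocompact_atTop (E := ℝ)).eventually_ge_atTop 1] with s hs t ht
    rw [Real.norm_eq_abs] at hs
    have hpole (r : ℂ) (u : ℝ) : ‖r * ((t : ℂ) + s * I - u)⁻¹‖ ≤ ‖r‖ / |s| := by
      rw [norm_mul, norm_inv, div_eq_mul_inv]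
      gcongr
      simpa using abs_im_le_norm ((t : ℂ) + s * I - u)
    have hne (u : ℝ) : (t : ℂ) + s * I ≠ u := fun h => by
      simpa using (one_pos.trans_le hs).ne' (by simpa using congrArg im h)
    have hf := hC t (uIcc_of_le hσ ▸ ht) s hs
    rw [fShift_eq_fShiftReg_add hab x (hne a) (hne b)] at hf
    set P₁ := ratioResidue a b * cubicExp x a * ((t : ℂ) + s * I - a)⁻¹
    set P₂ := ratioResidue b a * cubicExp x b * ((t : ℂ) + s * I - b)⁻¹
    calc ‖fShiftReg a b x (t + s * I)‖ = ‖fShiftReg a b x (t + s * I) + P₁ + P₂ - P₂ - P₁‖ := by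
          ring_nf
      _ ≤ ‖fShiftReg a b x (t + s * I) + P₁ + P₂‖ + ‖P₂‖ + ‖P₁‖ :=
          (norm_sub_le _ _).trans (add_le_add_left (norm_sub_le _ _) _)
      _ ≤ C * Real.exp (-σ₁ * |s| ^ 2) + D / |s| := by
        rw [sq_abs, add_div]
        linarith [hpole (ratioResidue a b * cubicExp x a) a,
          hpole (ratioResidue b a * cubicExp x b) b]

lemma intervalIntegral_fShift_vertical {a b : ℝ} (hab : a ≠ b) (x : ℝ) {σ : ℝ} (ha : σ ≠ a)
    (hb : σ ≠ b) (T : ℝ) :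
    ∫ y in -T..T, fShift a b x (σ + y * I) =
      (∫ y in -T..T, fShiftReg a b x (σ + y * I)) +
        ratioResidue a b * cubicExp x a * (∫ y in -T..T, ((σ : ℂ) + y * I - a)⁻¹) +
        ratioResidue b a * cubicExp x b * ∫ y in -T..T, ((σ : ℂ) + y * I - b)⁻¹ := by
  have hne (u : ℝ) (hu : σ ≠ u) (y : ℝ) : (σ : ℂ) + y * I ≠ u := fun h =>
    hu (by simpa using congrArg re h)
  have hpole (u : ℝ) (hu : σ ≠ u) :
      IntervalIntegrable (fun y : ℝ => ((σ : ℂ) + y * I - u)⁻¹) volume (-T) T :=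
    ((by fun_prop : Continuous fun y : ℝ => (σ : ℂ) + y * I - u).inv₀ fun y =>
      sub_ne_zero.2 (hne u hu y)).intervalIntegrable _ _
  have hreg : IntervalIntegrable (fun y : ℝ => fShiftReg a b x (σ + y * I)) volume (-T) T :=
    ((differentiable_fShiftReg a b x).continuous.comp (by fun_prop)).intervalIntegrable _ _
  rw [← intervalIntegral.integral_const_mul, ← intervalIntegral.integral_const_mul,
    ← intervalIntegral.integral_add hreg ((hpole a ha).const_mul _),
    ← intervalIntegral.integral_add (hreg.add ((hpole a ha).const_mul _))
      ((hpole b hb).const_mul _)]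
  exact intervalIntegral.integral_congr fun y _ =>
    fShift_eq_fShiftReg_add hab x (hne a ha y) (hne b hb y)

lemma integral_fShift_vertical_sub {a b c c' : ℝ} (hab : a ≠ b) (x : ℝ) (hc : 0 < c)
    (hca : c < a) (hcb : c < b) (hac' : a < c') (hbc' : b < c') :
    (∫ y : ℝ, fShift a b x (c + y * I)) - ∫ y : ℝ, fShift a b x (c' + y * I) =
      -(2 * π) * (ratioResidue a b * cubicExp x a + ratioResidue b a * cubicExp x b) := by
  have hfull (σ : ℝ) (hσ : 0 < σ) (ha : σ ≠ a) (hb : σ ≠ b) :=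
    intervalIntegral_tendsto_integral (integrable_fShift_vertical a b x hσ ha hb)
      tendsto_neg_atTop_atBot tendsto_id
  have hreg := tendsto_integral_fShiftReg_vertical_sub hab x hc (hca.trans hac').le
  have hpole_a := (tendsto_integral_inv_sub_integral_inv hca hac').const_mul
    (ratioResidue a b * cubicExp x a)
  have hpole_b := (tendsto_integral_inv_sub_integral_inv hcb hbc').const_mul
    (ratioResidue b a * cubicExp x b)
  refine tendsto_nhds_unique ((hfull c hc hca.ne hcb.ne).sub
    (hfull c' (hc.trans (hca.trans hac')) hac'.ne' hbc'.ne')) ?_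
  convert (hreg.neg.sub hpole_a).sub hpole_b using 2
  · simp only [id, intervalIntegral_fShift_vertical hab x hca.ne hcb.ne,
      intervalIntegral_fShift_vertical hab x hac'.ne' hbc'.ne']
    ring
  · ring

theorem contour_shift_residues_general (a b c c' x : ℝ) (hab : a ≠ b)
    (hc0 : 0 < c) (hc1 : c < min a b) (hc' : max a b < c') :
    MeasureTheory.Integrable (fun y : ℝ => fShift a b x ((c : ℂ) + (y : ℂ) * I)) ∧
    MeasureTheory.Integrable (fun y : ℝ => fShift a b x ((c' : ℂ) + (y : ℂ) * I)) ∧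
    (1 / (2 * Real.pi)) * (∫ y : ℝ, fShift a b x ((c : ℂ) + (y : ℂ) * I))
      = (1 / (2 * Real.pi)) * (∫ y : ℝ, fShift a b x ((c' : ℂ) + (y : ℂ) * I)) +
          2 * (((a : ℂ) + b) / ((a : ℂ) - b)) *
            ((b : ℂ) * Complex.exp (-(x : ℂ) * b + (b : ℂ) ^ 3 / 3) -
              (a : ℂ) * Complex.exp (-(x : ℂ) * a + (a : ℂ) ^ 3 / 3)) := by
  obtain ⟨hca, hcb⟩ := lt_min_iff.1 hc1
  obtain ⟨hac', hbc'⟩ := max_lt_iff.1 hc'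
  refine ⟨integrable_fShift_vertical a b x hc0 hca.ne hcb.ne,
    integrable_fShift_vertical a b x (hc0.trans (hca.trans hac')) hac'.ne' hbc'.ne', ?_⟩
  have hshift := integral_fShift_vertical_sub hab x hc0 hca hcb hac' hbc'
  have hπ : (π : ℂ) ≠ 0 := ofReal_ne_zero.2 pi_ne_zero
  have hab' : (a : ℂ) - b ≠ 0 := sub_ne_zero.2 (ofReal_injective.ne hab)
  have hba' : (b : ℂ) - a ≠ 0 := sub_ne_zero.2 (ofReal_injective.ne hab.symm)
  rw [← sub_eq_iff_eq_add', ← mul_sub, hshift, ratioResidue, ratioResidue, cubicExp, cubicExp]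
  field_simp
  ring

/-- **Residue decomposition for the crossover function `A^{(a,b)}`:** moving the contour
from `c + iℝ` (with `0 < c < min(a,b)`) to `c' + iℝ` (with `c' > max(a,b)`) across the
poles at `z = a` and `z = b` yields
`(1/2π)∫_{c+iℝ} f = (1/2π)∫_{c'+iℝ} f + 2((a+b)/(a−b))·(b e^{−xb+b³/3} − a e^{−xa+a³/3})`. -/
theorem contour_shift_residues (a b c c' x : ℝ) (ha : 0 < a) (hb : 0 < b) (hab : a ≠ b)
    (hc0 : 0 < c) (hc1 : c < min a b) (hc' : max a b < c') :
    MeasureTheory.Integrable (fun y : ℝ => fShift a b x ((c : ℂ) + (y : ℂ) * I)) ∧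
    MeasureTheory.Integrable (fun y : ℝ => fShift a b x ((c' : ℂ) + (y : ℂ) * I)) ∧
    (1 / (2 * Real.pi)) * (∫ y : ℝ, fShift a b x ((c : ℂ) + (y : ℂ) * I))
      = (1 / (2 * Real.pi)) * (∫ y : ℝ, fShift a b x ((c' : ℂ) + (y : ℂ) * I)) +
          2 * (((a : ℂ) + b) / ((a : ℂ) - b)) *
            ((b : ℂ) * Complex.exp (-(x : ℂ) * b + (b : ℂ) ^ 3 / 3) -
              (a : ℂ) * Complex.exp (-(x : ℂ) * a + (a : ℂ) ^ 3 / 3)) :=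
  contour_shift_residues_general a b c c' x hab hc0 hc1 hc'
end
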